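/- arXiv:2504.16371 — 4 statements merged into one kernel-verified Lean document; each statement's English description precedes it below -/
import Mathlib

section
/- For every Δ ≥ 0, the shrunk version of the transformed simplex S' with respect to the ℓ∞ norm satisfies (S')_Δ^∞ = {x ∈ ℝ^M : x_m ≥ Δ − 1/(2 q β_m) for every m ∈ [M], and Σ_{m=1}^M (β_m/c_m) x_m ≤ 1/2 − Δ q'}. -/
open Finset

/-- The transformed simplex
`S' = {x : Σ (β m / c m) x m ≤ 1/2, x m ≥ -1/(2 q β m) ∀ m}`. -/
def transformedSimplex (M : ℕ) (c β : Fin M → ℝ) : Set (Fin M → ℝ) :=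
  {x | (∑ m, (β m / c m) * x m ≤ 1 / 2) ∧
        ∀ m, x m ≥ -(1 / (2 * (∑ m', 1 / c m') * β m))}

/-- The shrunk version of a set `Y ⊆ ℝ^M` with respect to the ℓ∞ norm:
`Y_Δ^∞ = {x ∈ Y : x + v ∈ Y for all ‖v‖_∞ ≤ Δ}`. -/
def shrunkSet (M : ℕ) (Y : Set (Fin M → ℝ)) (Δ : ℝ) : Set (Fin M → ℝ) :=
  {x ∈ Y | ∀ v : Fin M → ℝ, (∀ m, |v m| ≤ Δ) → x + v ∈ Y}

/-- Exact form of the shrunk version of the transformed simplex. -/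
theorem shrunk_transformedSimplex (M : ℕ) (hM : 0 < M) (c β : Fin M → ℝ)
    (hc : ∀ m, 0 < c m) (hβ : ∀ m, 0 < β m) (Δ : ℝ) (hΔ : 0 ≤ Δ) :
    shrunkSet M (transformedSimplex M c β) Δ
      = {x : Fin M → ℝ |
          (∀ m, x m ≥ Δ - 1 / (2 * (∑ m', 1 / c m') * β m)) ∧
          ∑ m, (β m / c m) * x m ≤ 1 / 2 - Δ * (∑ m, β m / c m)} := by
  ext x
  simp only [shrunkSet, transformedSimplex, Set.mem_setOf_eq, Set.mem_sep_iff]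
  constructor
  · rintro ⟨⟨hsum, hcoord⟩, hshr⟩
    constructor
    · intro m
      have h := hshr (fun k => if k = m then -Δ else 0) (by
        intro k
        by_cases h : k = m <;> simp [h, abs_of_nonneg hΔ, hΔ])
      have h2 := h.2 m
      simp only [Pi.add_apply, if_pos rfl, if_true] at h2
      linarith
    · have h := hshr (fun _ => Δ) (fun k => by simp [abs_of_nonneg hΔ])
      have h1 := h.1
      simp only [Pi.add_apply, mul_add, Finset.sum_add_distrib] at h1
      have : ∑ m, β m / c m * Δ = Δ * ∑ m, β m / c m := by
        rw [Finset.mul_sum]; congr 1; ext m; ring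
      linarith [h1, this ▸ h1]
  · rintro ⟨hcoord, hsum⟩
    have hq : 0 ≤ ∑ m, β m / c m :=
      Finset.sum_nonneg fun m _ => le_of_lt (div_pos (hβ m) (hc m))
    refine ⟨⟨?_, fun m => by have := hcoord m; linarith [mul_nonneg hΔ hq]⟩, ?_⟩
    · nlinarith [mul_nonneg hΔ hq]
    · intro v hv
      constructor
      · have key : ∑ m, β m / c m * (x m + v m) ≤
            ∑ m, (β m / c m * x m + β m / c m * Δ) := by
          apply Finset.sum_le_sum
          intro m _
          have hvm := (abs_le.mp (hv m)).2
          have hpos : 0 ≤ β m / c m := le_of_lt (div_pos (hβ m) (hc m))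
          nlinarith
        simp only [Pi.add_apply]
        calc ∑ m, β m / c m * (x m + v m)
            ≤ ∑ m, (β m / c m * x m + β m / c m * Δ) := key
          _ = (∑ m, β m / c m * x m) + Δ * ∑ m, β m / c m := by
              rw [Finset.sum_add_distrib, Finset.mul_sum]
              congr 1; apply Finset.sum_congr rfl; intro m _; ring
          _ ≤ 1 / 2 := by linarith
      · intro m
        have hvm := (abs_le.mp (hv m)).1
        have := hcoord m
        simp only [Pi.add_apply]
        linarith
end

section
/- For every Δ with 0 ≤ Δ ≤ 1/(2q'), the sharpness of the transformed simplex S' with respect to the ℓ∞ norm satisfies Sharp_{S'}^∞(Δ) = Δ √((M − 1) + (2 q' ρ̃ − 1)²), where ρ_m := c_m/β_m and ρ̃ := max_{m ∈ [M]} ρ_m. -/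
open Finset

/-- The sharpness of `Y ⊆ ℝ^M` with respect to the ℓ∞ norm:
`Sharp_Y^∞(Δ) = sup_{x ∈ Y} inf_{y ∈ Y_Δ^∞} ‖y − x‖₂`. -/
noncomputable def sharpness (M : ℕ) (Y : Set (Fin M → ℝ)) (Δ : ℝ) : ℝ :=
  sSup {r : ℝ | ∃ x ∈ Y,
    r = sInf {s : ℝ | ∃ y ∈ shrunkSet M Y Δ, s = Real.sqrt (∑ m, (y m - x m) ^ 2)}}

set_option maxHeartbeats 1000000 in
/-- Exact sharpness of the transformed simplex:
`Sharp_{S'}^∞(Δ) = Δ √((M − 1) + (2 q' ρ̃ − 1)²)` with `ρ_m = c_m / β_m`,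
`ρ̃ = max_m ρ_m`, `q' = Σ_m β_m / c_m`. -/
theorem sharpness_transformedSimplex (M : ℕ) [NeZero M] (c β : Fin M → ℝ)
    (hc : ∀ m, 0 < c m) (hβ : ∀ m, 0 < β m) (Δ : ℝ) (hΔ : 0 ≤ Δ)
    (hΔ' : Δ ≤ 1 / (2 * ∑ m, β m / c m)) :
    sharpness M (transformedSimplex M c β) Δ
      = Δ * Real.sqrt ((M - 1) +
          (2 * (∑ m, β m / c m) * (⨆ m, c m / β m) - 1) ^ 2) := by
  have hM : 1 ≤ M := Nat.one_le_iff_ne_zero.mpr (NeZero.ne M)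
  have hMR : (1:ℝ) ≤ (M:ℝ) := by exact_mod_cast hM
  set q : ℝ := ∑ m', 1 / c m' with hqdef
  set Q : ℝ := ∑ m, β m / c m with hQdef
  have hq : 0 < q := Finset.sum_pos (fun m _ => by have := hc m; positivity) univ_nonempty
  have hQ : 0 < Q := Finset.sum_pos (fun m _ => by have := hc m; have := hβ m; positivity) univ_nonempty
  have hΔQ : 2 * Δ * Q ≤ 1 := by
    rw [le_div_iff₀ (by positivity : (0:ℝ) < 2 * Q)] at hΔ'
    nlinarith
  obtain ⟨m₀, hm₀⟩ := Finite.exists_max (fun m : Fin M => c m / β m)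
  set ρ : ℝ := c m₀ / β m₀ with hρdef
  have hρ : 0 < ρ := div_pos (hc m₀) (hβ m₀)
  have hsup : (⨆ m, c m / β m) = ρ := by
    refine le_antisymm (ciSup_le fun m => hm₀ m) ?_
    exact le_ciSup (f := fun m => c m / β m)
      (Set.Finite.bddAbove (Set.finite_range _)) m₀
  have ha₀pos : 0 < β m₀ / c m₀ := div_pos (hβ m₀) (hc m₀)
  have ha₀ : (β m₀ / c m₀) * ρ = 1 := by
    rw [hρdef, div_mul_div_comm, mul_comm (β m₀) (c m₀)]
    exact div_self (mul_pos (hc m₀) (hβ m₀)).ne'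
  have hQρ : 1 ≤ Q * ρ := by
    have h1 : β m₀ / c m₀ ≤ Q :=
      Finset.single_le_sum (fun m _ => (div_pos (hβ m) (hc m)).le) (mem_univ m₀)
    nlinarith
  set L : Fin M → ℝ := fun m => -(1 / (2 * q * β m)) with hLdef
  have hsumL : ∑ m, (β m / c m) * L m = -(1/2) := by
    have h1 : ∀ m ∈ (univ : Finset (Fin M)),
        (β m / c m) * L m = -(1/(2*q)) * (1 / c m) := by
      intro m _
      simp only [hLdef]
      have hb := (hβ m).ne'
      have hcm := (hc m).ne'
      field_simp
    rw [Finset.sum_congr rfl h1, ← Finset.mul_sum, ← hqdef]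
    field_simp
  -- membership characterizations
  have hmemY : ∀ x : Fin M → ℝ, x ∈ transformedSimplex M c β ↔
      ((∑ m, (β m / c m) * x m) ≤ 1/2 ∧ ∀ m, L m ≤ x m) := by
    intro x
    simp only [transformedSimplex, Set.mem_setOf_eq, ge_iff_le, hLdef, ← hqdef]
  have hmemS : ∀ x : Fin M → ℝ, x ∈ shrunkSet M (transformedSimplex M c β) Δ ↔
      ((∑ m, (β m / c m) * x m) ≤ 1/2 - Δ * Q ∧ ∀ m, L m + Δ ≤ x m) := by
    intro x
    constructor
    · rintro ⟨hxY, hv⟩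
      have h1 := (hmemY _).1 (hv (fun _ => Δ) (fun m => by
        simp [abs_of_nonneg hΔ]))
      have h2 := (hmemY _).1 (hv (fun _ => -Δ) (fun m => by
        simp [abs_of_nonneg hΔ]))
      simp only [Pi.add_apply] at h1 h2
      constructor
      · have hsum : ∑ m, (β m / c m) * (x m + Δ)
            = (∑ m, (β m / c m) * x m) + Q * Δ := by
          simp only [mul_add]
          rw [Finset.sum_add_distrib, ← Finset.sum_mul, ← hQdef]
        have := h1.1
        rw [hsum] at this
        linarith
      · intro m
        have := h2.2 m
        linarith
    · rintro ⟨hx1, hx2⟩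
      constructor
      · rw [hmemY]
        constructor
        · nlinarith [hΔ, hQ]
        · intro m; linarith [hx2 m]
      · intro v hv
        rw [hmemY]
        constructor
        · have hsum : ∑ m, (β m / c m) * (x m + v m)
              = (∑ m, (β m / c m) * x m) + ∑ m, (β m / c m) * v m := by
            simp only [mul_add]
            rw [Finset.sum_add_distrib]
          have hvle : ∑ m, (β m / c m) * v m ≤ ∑ m, (β m / c m) * Δ := by
            refine Finset.sum_le_sum fun m _ => ?_
            exact mul_le_mul_of_nonneg_left ((abs_le.1 (hv m)).2) (div_pos (hβ m) (hc m)).le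
          have hQΔ : ∑ m, (β m / c m) * Δ = Q * Δ := by
            rw [← Finset.sum_mul, ← hQdef]
          simp only [Pi.add_apply]
          rw [hsum]
          nlinarith [hx1]
        · intro m
          simp only [Pi.add_apply]
          have := (abs_le.1 (hv m)).1
          linarith [hx2 m]
  -- the shrunk set is nonempty
  have hy₀S : (fun m => L m + Δ) ∈ shrunkSet M (transformedSimplex M c β) Δ := by
    rw [hmemS]
    constructor
    · have hsum : ∑ m, (β m / c m) * (L m + Δ)
          = (∑ m, (β m / c m) * L m) + Q * Δ := by
        simp only [mul_add]
        rw [Finset.sum_add_distrib, ← Finset.sum_mul, ← hQdef]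
      rw [hsum, hsumL]
      nlinarith
    · intro m; exact le_refl _
  -- upper bound: for every x in the simplex, the inf is at most the bound
  have hupper : ∀ x ∈ transformedSimplex M c β,
      sInf {s : ℝ | ∃ y ∈ shrunkSet M (transformedSimplex M c β) Δ,
        s = Real.sqrt (∑ m, (y m - x m) ^ 2)}
      ≤ Δ * Real.sqrt (((M:ℝ) - 1) + (2*Q*ρ - 1)^2) := by
    intro x hx
    obtain ⟨hx1, hx2⟩ := (hmemY x).1 hx
    set y : Fin M → ℝ := fun m => x m + Δ * (1 - 2*Q*(x m - L m)) with hydef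
    set s : Fin M → ℝ := fun m => x m - L m with hsdef
    have hs0 : ∀ m, 0 ≤ s m := fun m => by simp only [hsdef]; linarith [hx2 m]
    have hT : ∑ m, (β m / c m) * s m ≤ 1 := by
      have heq : ∑ m, (β m / c m) * s m
          = (∑ m, (β m / c m) * x m) - (∑ m, (β m / c m) * L m) := by
        rw [← Finset.sum_sub_distrib]
        exact Finset.sum_congr rfl fun m _ => by simp only [hsdef]; ring
      rw [heq, hsumL]; linarith
    have hsρ : ∀ m, s m ≤ ρ := by
      intro m
      have h1 : (β m / c m) * s m ≤ ∑ m', (β m' / c m') * s m' :=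
        Finset.single_le_sum (fun i _ => mul_nonneg (div_pos (hβ i) (hc i)).le (hs0 i)) (mem_univ m)
      have h2 : (β m / c m) * s m ≤ 1 := le_trans h1 hT
      have h3 : s m ≤ c m / β m := by
        rw [le_div_iff₀ (hβ m)]
        rw [div_mul_eq_mul_div, div_le_one (hc m)] at h2
        linarith
      exact le_trans h3 (hm₀ m)
    have hSsum : ∑ m, s m ≤ ρ := by
      have hle : ∀ m ∈ univ, s m ≤ ρ * ((β m / c m) * s m) := by
        intro m _
        have hid : s m = (c m / β m) * ((β m / c m) * s m) := by
          rw [← mul_assoc, div_mul_div_comm, mul_comm (β m) (c m),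
            div_self (mul_pos (hc m) (hβ m)).ne', one_mul]
        calc s m = (c m / β m) * ((β m / c m) * s m) := hid
          _ ≤ ρ * ((β m / c m) * s m) :=
            mul_le_mul_of_nonneg_right (hm₀ m) (mul_nonneg (div_pos (hβ m) (hc m)).le (hs0 m))
      calc ∑ m, s m ≤ ∑ m, ρ * ((β m / c m) * s m) := Finset.sum_le_sum hle
        _ = ρ * ∑ m, (β m / c m) * s m := by rw [Finset.mul_sum]
        _ ≤ ρ * 1 := mul_le_mul_of_nonneg_left hT hρ.le
        _ = ρ := mul_one ρ
    have hK : ∑ m, (1 - 2*Q*s m)^2 ≤ ((M:ℝ) - 1) + (2*Q*ρ - 1)^2 := by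
      have hterm : ∀ m ∈ (univ : Finset (Fin M)),
          (1 - 2*Q*s m)^2 ≤ 1 + (4*Q*(Q*ρ - 1)) * s m := by
        intro m _
        nlinarith [sq_nonneg Q, mul_nonneg (hs0 m) (sub_nonneg.2 (hsρ m))]
      calc ∑ m, (1 - 2*Q*s m)^2 ≤ ∑ m, (1 + (4*Q*(Q*ρ - 1)) * s m) :=
            Finset.sum_le_sum hterm
        _ = (M:ℝ) + (4*Q*(Q*ρ - 1)) * ∑ m, s m := by
            rw [Finset.sum_add_distrib, ← Finset.mul_sum, Finset.sum_const,
              card_univ, Fintype.card_fin, nsmul_eq_mul, mul_one]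
        _ ≤ (M:ℝ) + (4*Q*(Q*ρ - 1)) * ρ := by
            have h4 : 0 ≤ 4*Q*(Q*ρ - 1) := by nlinarith
            linarith [mul_le_mul_of_nonneg_left hSsum h4]
        _ = ((M:ℝ) - 1) + (2*Q*ρ - 1)^2 := by ring
    have hyS : y ∈ shrunkSet M (transformedSimplex M c β) Δ := by
      rw [hmemS]
      constructor
      · have hexp : ∑ m, (β m / c m) * y m
            = (1 - 2*Δ*Q) * (∑ m, (β m / c m) * x m) + Δ * Q
              + (2*Δ*Q) * (∑ m, (β m / c m) * L m) := by
          have h1 : ∀ m ∈ (univ : Finset (Fin M)), (β m / c m) * y m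
              = (1 - 2*Δ*Q) * ((β m / c m) * x m)
                + ((β m / c m) * Δ + (2*Δ*Q) * ((β m / c m) * L m)) := by
            intro m _
            simp only [hydef]
            ring
          rw [Finset.sum_congr rfl h1, Finset.sum_add_distrib, Finset.sum_add_distrib,
            ← Finset.mul_sum, ← Finset.mul_sum, ← Finset.sum_mul, ← hQdef]
          ring
        rw [hexp, hsumL]
        nlinarith [mul_le_mul_of_nonneg_left hx1 (by linarith : (0:ℝ) ≤ 1 - 2*Δ*Q)]
      · intro m
        simp only [hydef]
        nlinarith [hx2 m, mul_nonneg (hs0 m) (by linarith : (0:ℝ) ≤ 1 - 2*Δ*Q),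
          hs0 m]
    have hdist : ∑ m, (y m - x m)^2 = Δ^2 * ∑ m, (1 - 2*Q*s m)^2 := by
      rw [Finset.mul_sum]
      refine Finset.sum_congr rfl fun m _ => ?_
      simp only [hydef, hsdef]
      ring
    have hd2 : Real.sqrt (∑ m, (y m - x m)^2)
        ≤ Δ * Real.sqrt (((M:ℝ) - 1) + (2*Q*ρ - 1)^2) := by
      rw [hdist, Real.sqrt_mul (sq_nonneg Δ), Real.sqrt_sq hΔ]
      exact mul_le_mul_of_nonneg_left (Real.sqrt_le_sqrt hK) hΔ
    exact le_trans (csInf_le ⟨0, by rintro r ⟨z, hz, rfl⟩; positivity⟩ ⟨y, hyS, rfl⟩) hd2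
  -- the extremal vertex
  set xs : Fin M → ℝ := fun m => if m = m₀ then L m₀ + ρ else L m with hxsdef
  have hxsY : xs ∈ transformedSimplex M c β := by
    rw [hmemY]
    constructor
    · have hsum : ∑ m, (β m / c m) * xs m
          = (∑ m, (β m / c m) * L m) + (β m₀ / c m₀) * ρ := by
        have h1 : ∀ m ∈ (univ : Finset (Fin M)), (β m / c m) * xs m
            = (β m / c m) * L m + (if m = m₀ then (β m₀ / c m₀) * ρ else 0) := by
          intro m _
          simp only [hxsdef]
          by_cases hmm : m = m₀
          · subst hmm; simp; ring
          · simp [hmm]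
        rw [Finset.sum_congr rfl h1, Finset.sum_add_distrib, Finset.sum_ite_eq']
        simp
      rw [hsum, hsumL, ha₀]
      norm_num
    · intro m
      simp only [hxsdef]
      by_cases hmm : m = m₀
      · subst hmm; simp; linarith
      · simp [hmm]
  have hlower : Δ * Real.sqrt (((M:ℝ) - 1) + (2*Q*ρ - 1)^2)
      ≤ sInf {s : ℝ | ∃ y ∈ shrunkSet M (transformedSimplex M c β) Δ,
        s = Real.sqrt (∑ m, (y m - xs m) ^ 2)} := by
    refine le_csInf ⟨_, ⟨_, hy₀S, rfl⟩⟩ ?_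
    rintro r ⟨y, hyS, rfl⟩
    obtain ⟨hy1, hy2⟩ := (hmemS y).1 hyS
    -- coordinate bound at m₀
    have hG : ∑ m ∈ univ.erase m₀, (β m / c m) = Q - β m₀ / c m₀ := by
      have := Finset.sum_erase_add univ (fun m => β m / c m) (mem_univ m₀)
      rw [← hQdef] at this
      linarith
    have hL' : ∑ m ∈ univ.erase m₀, (β m / c m) * L m = -(1/2) - (β m₀ / c m₀) * L m₀ := by
      have := Finset.sum_erase_add univ (fun m => (β m / c m) * L m) (mem_univ m₀)
      rw [hsumL] at this
      linarith
    have herase : (-(1/2) - (β m₀ / c m₀) * L m₀) + Δ * (Q - β m₀ / c m₀)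
        ≤ ∑ m ∈ univ.erase m₀, (β m / c m) * y m := by
      have h1 : ∑ m ∈ univ.erase m₀, (β m / c m) * (L m + Δ)
          ≤ ∑ m ∈ univ.erase m₀, (β m / c m) * y m :=
        Finset.sum_le_sum fun m _ => mul_le_mul_of_nonneg_left (hy2 m) (div_pos (hβ m) (hc m)).le
      have h2 : ∑ m ∈ univ.erase m₀, (β m / c m) * (L m + Δ)
          = (∑ m ∈ univ.erase m₀, (β m / c m) * L m)
            + Δ * (∑ m ∈ univ.erase m₀, (β m / c m)) := by
        simp only [mul_add]
        rw [Finset.sum_add_distrib, Finset.mul_sum]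
        congr 1
        exact Finset.sum_congr rfl fun m _ => mul_comm _ _
      rw [h2, hL', hG] at h1
      exact h1
    have hkey0 : (β m₀ / c m₀) * y m₀
        ≤ (β m₀ / c m₀) * L m₀ + 1 - Δ * Q - Δ * (Q - β m₀ / c m₀) := by
      have hsplit := Finset.sum_erase_add univ (fun m => (β m / c m) * y m) (mem_univ m₀)
      linarith [hy1]
    have hxsm₀ : xs m₀ = L m₀ + ρ := by simp [hxsdef]
    have h3 : 2*Δ*Q - Δ*(β m₀ / c m₀) ≤ (β m₀ / c m₀) * (xs m₀ - y m₀) := by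
      rw [hxsm₀]
      nlinarith [hkey0, ha₀]
    have hkey : Δ * (2*Q*ρ - 1) ≤ xs m₀ - y m₀ := by
      rw [← mul_le_mul_iff_right₀ ha₀pos]
      calc (β m₀ / c m₀) * (Δ * (2*Q*ρ - 1))
          = 2*Δ*Q*((β m₀ / c m₀) * ρ) - Δ*(β m₀ / c m₀) := by ring
        _ = 2*Δ*Q - Δ*(β m₀ / c m₀) := by rw [ha₀]; ring
        _ ≤ (β m₀ / c m₀) * (xs m₀ - y m₀) := h3
    have hkeynn : 0 ≤ Δ * (2*Q*ρ - 1) := mul_nonneg hΔ (by nlinarith)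
    -- sum lower bound
    have hsumlb : Δ^2 * (((M:ℝ) - 1) + (2*Q*ρ - 1)^2) ≤ ∑ m, (y m - xs m)^2 := by
      have hstep1 : Δ^2 * (((M:ℝ) - 1) + (2*Q*ρ - 1)^2)
          = (∑ _m ∈ univ.erase m₀, Δ^2) + (Δ * (2*Q*ρ - 1))^2 := by
        rw [Finset.sum_const, card_erase_of_mem (mem_univ _), card_univ, Fintype.card_fin,
          nsmul_eq_mul, Nat.cast_sub hM, Nat.cast_one]
        ring
      rw [hstep1]
      have hstep2 : ∑ _m ∈ univ.erase m₀, Δ^2 ≤ ∑ m ∈ univ.erase m₀, (y m - xs m)^2 := by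
        refine Finset.sum_le_sum fun m hm => ?_
        have hmne : m ≠ m₀ := (Finset.mem_erase.1 hm).1
        have hxsm : xs m = L m := by simp [hxsdef, hmne]
        rw [hxsm]
        exact pow_le_pow_left₀ hΔ (by linarith [hy2 m]) 2
      have hstep3 : (Δ * (2*Q*ρ - 1))^2 ≤ (y m₀ - xs m₀)^2 := by
        have heq : (y m₀ - xs m₀)^2 = (xs m₀ - y m₀)^2 := by ring
        rw [heq]
        exact pow_le_pow_left₀ hkeynn hkey 2
      calc (∑ _m ∈ univ.erase m₀, Δ^2) + (Δ * (2*Q*ρ - 1))^2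
          ≤ (∑ m ∈ univ.erase m₀, (y m - xs m)^2) + (y m₀ - xs m₀)^2 :=
            add_le_add hstep2 hstep3
        _ = ∑ m, (y m - xs m)^2 :=
            Finset.sum_erase_add univ (fun m => (y m - xs m)^2) (mem_univ m₀)
    have : Δ * Real.sqrt (((M:ℝ) - 1) + (2*Q*ρ - 1)^2)
        = Real.sqrt (Δ^2 * (((M:ℝ) - 1) + (2*Q*ρ - 1)^2)) := by
      rw [Real.sqrt_mul (sq_nonneg Δ), Real.sqrt_sq hΔ]
    rw [this]
    exact Real.sqrt_le_sqrt hsumlb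
  -- assemble
  rw [hsup]
  unfold sharpness
  apply le_antisymm
  · refine csSup_le ⟨_, ⟨xs, hxsY, rfl⟩⟩ ?_
    rintro r ⟨x, hxM, rfl⟩
    exact hupper x hxM
  · refine le_trans hlower (le_csSup ⟨Δ * Real.sqrt (((M:ℝ) - 1) + (2*Q*ρ - 1)^2), ?_⟩
      ⟨xs, hxsY, rfl⟩)
    rintro r ⟨x, hxM, rfl⟩
    exact hupper x hxM
end

section
/- Under the deterministic conditions (i)–(iv) below, the cumulative estimation gap satisfies Σ_{t=T'+1}^{T} ( f(Θ̃_t X_t) − f(Θ_* X_t) ) ≤ L · max(H_{Y'}^∞, 2) · √( 2d ln(1 + TK²/(dν)) · (T − T') · Σ_{m=1}^M β_{T,m}² ). -/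
open Finset Matrix Real

set_option maxHeartbeats 1000000

/-- Regularized Gram matrix `G_t = Σ_{i=1}^{t-1} x_i x_iᵀ + ν I`. -/
noncomputable def gramMatrix (d : ℕ) (ν : ℝ) (xs : ℕ → Fin d → ℝ) (t : ℕ) :
    Matrix (Fin d) (Fin d) ℝ :=
  (∑ i ∈ Finset.Icc 1 (t - 1), Matrix.vecMulVec (xs i) (xs i))
    + ν • (1 : Matrix (Fin d) (Fin d) ℝ)

/-- Regularized least-squares estimate `θ̂_t = G_t⁻¹ Σ_{i=1}^{t-1} u_i x_i`. -/
noncomputable def rlsEstimate (d : ℕ) (ν : ℝ) (xs : ℕ → Fin d → ℝ) (us : ℕ → ℝ)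
    (t : ℕ) : Fin d → ℝ :=
  (gramMatrix d ν xs t)⁻¹ *ᵥ ∑ i ∈ Finset.Icc 1 (t - 1), us i • xs i

/-- Weighted norm `‖z‖_G = √(zᵀ G z)`. -/
noncomputable def wNorm (d : ℕ) (G : Matrix (Fin d) (Fin d) ℝ) (z : Fin d → ℝ) : ℝ :=
  Real.sqrt (z ⬝ᵥ (G *ᵥ z))

/-- Expected response vector `ΘX = (θ_1ᵀx_1, …, θ_Mᵀx_M)`. -/
def respVec (M d : ℕ) (Θ X : Fin M → Fin d → ℝ) : Fin M → ℝ := fun m => Θ m ⬝ᵥ X m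

/-- Confidence set `C_t = {Θ : ‖θ_m − θ̂_{t,m}‖_{G_{t,m}} ≤ β_{t,m} ∀ m}`. -/
noncomputable def confSet (M d : ℕ) (ν : ℝ) (β : ℕ → Fin M → ℝ)
    (x : ℕ → Fin M → Fin d → ℝ) (u : ℕ → Fin M → ℝ) (t : ℕ) :
    Set (Fin M → Fin d → ℝ) :=
  {Θ | ∀ m, wNorm d (gramMatrix d ν (fun i => x i m) t)
      (Θ m - rlsEstimate d ν (fun i => x i m) (fun i => u i m) t) ≤ β t m}

/-- Conservative safe decision set `D_t = {X ∈ D : ΘX ∈ Y ∀ Θ ∈ C_t}`. -/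
noncomputable def safeSet (M d : ℕ) (Y : Set (Fin M → ℝ))
    (Dm : Fin M → Set (Fin d → ℝ)) (ν : ℝ) (β : ℕ → Fin M → ℝ)
    (x : ℕ → Fin M → Fin d → ℝ) (u : ℕ → Fin M → ℝ) (t : ℕ) :
    Set (Fin M → Fin d → ℝ) :=
  {X | (∀ m, X m ∈ Dm m) ∧
      ∀ Θ ∈ confSet M d ν β x u t, respVec M d Θ X ∈ Y}

/-- Maximum shrinkage `H_Y^∞ = sup {Δ ≥ 0 : Y_Δ^∞ ≠ ∅}`. -/
noncomputable def maxShrinkage (M : ℕ) (Y : Set (Fin M → ℝ)) : ℝ :=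
  sSup {Δ : ℝ | 0 ≤ Δ ∧ (shrunkSet M Y Δ).Nonempty}

section AuxLemmas

variable {d : ℕ}

lemma dot_symm (A : Matrix (Fin d) (Fin d) ℝ) (hA : Aᵀ = A) (a b : Fin d → ℝ) :
    a ⬝ᵥ (A *ᵥ b) = b ⬝ᵥ (A *ᵥ a) := by
  rw [Matrix.dotProduct_mulVec, ← Matrix.mulVec_transpose, hA, dotProduct_comm]

lemma gram_transpose (ν : ℝ) (xs : ℕ → Fin d → ℝ) (t : ℕ) :
    (gramMatrix d ν xs t)ᵀ = gramMatrix d ν xs t := by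
  ext i j
  simp only [gramMatrix, Matrix.transpose_apply, Matrix.add_apply, Matrix.smul_apply,
    Finset.sum_apply, Matrix.sum_apply, Matrix.vecMulVec_apply, Matrix.one_apply]
  by_cases h : i = j
  · subst h; simp [mul_comm]
  · rw [if_neg h, if_neg (Ne.symm h)]
    congr 1
    exact Finset.sum_congr rfl fun k _ => mul_comm _ _

lemma vecMulVec_mulVec' (u v z : Fin d → ℝ) :
    Matrix.vecMulVec u v *ᵥ z = (v ⬝ᵥ z) • u := by
  ext i
  simp [Matrix.mulVec, Matrix.vecMulVec_apply, dotProduct, Finset.sum_mul, Finset.mul_sum,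
    mul_comm, mul_assoc, mul_left_comm]

lemma gram_quad (ν : ℝ) (xs : ℕ → Fin d → ℝ) (t : ℕ) (z : Fin d → ℝ) :
    z ⬝ᵥ (gramMatrix d ν xs t *ᵥ z)
      = (∑ i ∈ Finset.Icc 1 (t-1), (xs i ⬝ᵥ z)^2) + ν * (z ⬝ᵥ z) := by
  unfold gramMatrix
  rw [Matrix.add_mulVec, dotProduct_add]
  congr 1
  · induction' (Finset.Icc 1 (t-1)) using Finset.induction with a s ha ih
    · simp
    · rw [Finset.sum_insert ha, Finset.sum_insert ha, Matrix.add_mulVec, dotProduct_add, ih,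
        vecMulVec_mulVec', dotProduct_smul, smul_eq_mul, dotProduct_comm]
      ring_nf
  · rw [Matrix.smul_mulVec, Matrix.one_mulVec, dotProduct_smul, smul_eq_mul]

lemma gram_posDef {ν : ℝ} (hν : 0 < ν) (xs : ℕ → Fin d → ℝ) (t : ℕ) :
    (gramMatrix d ν xs t).PosDef := by
  refine Matrix.PosDef.of_dotProduct_mulVec_pos ?_ ?_
  · have h : (gramMatrix d ν xs t)ᴴ = (gramMatrix d ν xs t)ᵀ := by
      ext i j; simp [Matrix.conjTranspose_apply, Matrix.transpose_apply]
    rw [Matrix.IsHermitian, h, gram_transpose]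
  · intro z hz
    rw [star_trivial, gram_quad]
    have h1 : 0 ≤ ∑ i ∈ Finset.Icc 1 (t-1), (xs i ⬝ᵥ z)^2 :=
      Finset.sum_nonneg fun i _ => sq_nonneg _
    have h2 : 0 < z ⬝ᵥ z := by
      have hnn : 0 ≤ z ⬝ᵥ z := by
        simp only [dotProduct]
        exact Finset.sum_nonneg fun i _ => mul_self_nonneg _
      rcases hnn.lt_or_eq with h | h
      · exact h
      · exact absurd ((dotProduct_self_eq_zero).mp h.symm) hz
    nlinarith

lemma gram_psd_quad {ν : ℝ} (hν : 0 < ν) (xs : ℕ → Fin d → ℝ) (t : ℕ) :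
    ∀ z, 0 ≤ z ⬝ᵥ (gramMatrix d ν xs t *ᵥ z) :=
  fun z => by simpa using (gram_posDef hν xs t).posSemidef.dotProduct_mulVec_nonneg z

lemma cs_quad (A : Matrix (Fin d) (Fin d) ℝ) (hA : Aᵀ = A)
    (hpsd : ∀ z, 0 ≤ z ⬝ᵥ (A *ᵥ z)) (u v : Fin d → ℝ) :
    (u ⬝ᵥ (A *ᵥ v))^2 ≤ (u ⬝ᵥ (A *ᵥ u)) * (v ⬝ᵥ (A *ᵥ v)) := by
  have key : ∀ s : ℝ, 0 ≤ (v ⬝ᵥ (A *ᵥ v)) * (s*s) + (2*(u ⬝ᵥ (A *ᵥ v))) * s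
      + (u ⬝ᵥ (A *ᵥ u)) := by
    intro s
    have h := hpsd (u + s • v)
    have expand : (u + s • v) ⬝ᵥ (A *ᵥ (u + s • v))
        = (v ⬝ᵥ (A *ᵥ v))*(s*s) + (2*(u ⬝ᵥ (A *ᵥ v)))*s + (u ⬝ᵥ (A *ᵥ u)) := by
      simp only [Matrix.mulVec_add, Matrix.mulVec_smul, dotProduct_add, add_dotProduct,
        dotProduct_smul, smul_dotProduct, smul_eq_mul]
      rw [dot_symm A hA v u]
      ring
    linarith [expand ▸ h]
  have hd := discrim_le_zero key
  rw [discrim] at hd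
  nlinarith [hd]

lemma abs_dot_le (A : Matrix (Fin d) (Fin d) ℝ) (hA : Aᵀ = A)
    (hpsd : ∀ z, 0 ≤ z ⬝ᵥ (A *ᵥ z)) (u v : Fin d → ℝ) :
    |u ⬝ᵥ (A *ᵥ v)| ≤ Real.sqrt (u ⬝ᵥ (A *ᵥ u)) * Real.sqrt (v ⬝ᵥ (A *ᵥ v)) := by
  rw [← Real.sqrt_sq_eq_abs, ← Real.sqrt_mul (hpsd u)]
  exact Real.sqrt_le_sqrt (cs_quad A hA hpsd u v)

lemma wNorm_add_le (A : Matrix (Fin d) (Fin d) ℝ) (hA : Aᵀ = A)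
    (hpsd : ∀ z, 0 ≤ z ⬝ᵥ (A *ᵥ z)) (u v : Fin d → ℝ) :
    wNorm d A (u + v) ≤ wNorm d A u + wNorm d A v := by
  have expand : (u + v) ⬝ᵥ (A *ᵥ (u + v))
      = u ⬝ᵥ (A *ᵥ u) + 2*(u ⬝ᵥ (A *ᵥ v)) + v ⬝ᵥ (A *ᵥ v) := by
    simp only [Matrix.mulVec_add, dotProduct_add, add_dotProduct]
    rw [dot_symm A hA v u]; ring
  unfold wNorm
  have h1 := abs_dot_le A hA hpsd u v
  have h2 := le_abs_self (u ⬝ᵥ (A *ᵥ v))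
  have h3 := Real.sq_sqrt (hpsd u)
  have h4 := Real.sq_sqrt (hpsd v)
  have h5 := Real.sqrt_nonneg (u ⬝ᵥ (A *ᵥ u))
  have h6 := Real.sqrt_nonneg (v ⬝ᵥ (A *ᵥ v))
  calc Real.sqrt ((u + v) ⬝ᵥ (A *ᵥ (u + v)))
      ≤ Real.sqrt ((Real.sqrt (u ⬝ᵥ (A *ᵥ u)) + Real.sqrt (v ⬝ᵥ (A *ᵥ v)))^2) := by
        apply Real.sqrt_le_sqrt; rw [expand]; nlinarith
    _ = _ := Real.sqrt_sq (by positivity)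

lemma wNorm_neg (A : Matrix (Fin d) (Fin d) ℝ) (u : Fin d → ℝ) :
    wNorm d A (-u) = wNorm d A u := by
  simp [wNorm, Matrix.mulVec_neg, dotProduct_neg, neg_dotProduct]

lemma gram_succ (ν : ℝ) (xs : ℕ → Fin d → ℝ) (t : ℕ) (ht : 1 ≤ t) :
    gramMatrix d ν xs (t+1) = gramMatrix d ν xs t + Matrix.vecMulVec (xs t) (xs t) := by
  obtain ⟨k, rfl⟩ : ∃ k, t = k + 1 := ⟨t - 1, by omega⟩
  unfold gramMatrix
  rw [Nat.add_sub_cancel, Nat.add_sub_cancel, Finset.sum_Icc_succ_top (by omega)]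
  abel

lemma w_nonneg {ν : ℝ} (hν : 0 < ν) (xs : ℕ → Fin d → ℝ) (t : ℕ) (b : Fin d → ℝ) :
    0 ≤ b ⬝ᵥ ((gramMatrix d ν xs t)⁻¹ *ᵥ b) := by
  have h := ((gram_posDef hν xs t).inv).posSemidef.dotProduct_mulVec_nonneg b
  simpa using h

lemma det_gram_succ {ν : ℝ} (hν : 0 < ν) (xs : ℕ → Fin d → ℝ) (t : ℕ) (ht : 1 ≤ t) :
    (gramMatrix d ν xs (t+1)).det
      = (gramMatrix d ν xs t).det
        * (1 + xs t ⬝ᵥ ((gramMatrix d ν xs t)⁻¹ *ᵥ xs t)) := by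
  rw [gram_succ ν xs t ht, Matrix.vecMulVec_eq Unit (xs t) (xs t),
    Matrix.det_add_replicateCol_mul_replicateRow (isUnit_iff_ne_zero.mpr (gram_posDef hν xs t).det_pos.ne')]
  congr 1
  rw [Matrix.det_unique]
  simp only [Matrix.add_apply, Matrix.one_apply_eq, Matrix.mul_apply, Matrix.replicateRow_apply,
    Matrix.replicateCol_apply, Finset.univ_unique, Finset.sum_singleton]
  congr 1
  simp only [Matrix.mulVec, dotProduct, Finset.sum_mul, Finset.mul_sum]
  rw [Finset.sum_comm]
  apply Finset.sum_congr rfl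
  intro j _
  apply Finset.sum_congr rfl
  intro k _
  ring

lemma trace_eq_sum_eig (A : Matrix (Fin d) (Fin d) ℝ) (hA : A.IsHermitian) :
    A.trace = ∑ i, hA.eigenvalues i := by
  nth_rewrite 1 [hA.spectral_theorem]
  rw [Unitary.conjStarAlgAut_apply]
  rw [Matrix.trace_mul_comm, ← Matrix.mul_assoc]
  rw [Unitary.coe_star_mul_self]
  rw [Matrix.one_mul, Matrix.trace_diagonal]
  simp

lemma det_le_trace_pow (A : Matrix (Fin d) (Fin d) ℝ) (hA : A.PosDef) (hd : 0 < d) :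
    A.det ≤ (A.trace / d) ^ d := by
  have hH := hA.isHermitian
  have hpos : ∀ i, 0 < hH.eigenvalues i := hA.eigenvalues_pos
  have hdet : A.det = ∏ i, hH.eigenvalues i := by
    rw [hH.det_eq_prod_eigenvalues]; norm_num
  have htr : A.trace = ∑ i, hH.eigenvalues i := trace_eq_sum_eig A hH
  have hgm : ∏ i, (hH.eigenvalues i) ^ ((d : ℝ)⁻¹)
      ≤ ∑ i : Fin d, (d : ℝ)⁻¹ * hH.eigenvalues i := by
    apply Real.geom_mean_le_arith_mean_weighted
    · intro i _; positivity
    · simp [Finset.card_univ]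
      field_simp
    · intro i _; exact (hpos i).le
  have hsum : ∑ i : Fin d, (d : ℝ)⁻¹ * hH.eigenvalues i = A.trace / d := by
    rw [htr, ← Finset.mul_sum]; ring
  have hgm_nonneg : 0 ≤ ∏ i, (hH.eigenvalues i) ^ ((d : ℝ)⁻¹) :=
    Finset.prod_nonneg fun i _ => Real.rpow_nonneg (hpos i).le _
  have hpow : (∏ i, (hH.eigenvalues i) ^ ((d : ℝ)⁻¹)) ^ d = A.det := by
    rw [← Finset.prod_pow, hdet]
    apply Finset.prod_congr rfl
    intro i _
    rw [← Real.rpow_natCast ((hH.eigenvalues i) ^ ((d : ℝ)⁻¹)) d,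
      ← Real.rpow_mul (hpos i).le, inv_mul_cancel₀ (by positivity : (d:ℝ) ≠ 0),
      Real.rpow_one]
  calc A.det = (∏ i, (hH.eigenvalues i) ^ ((d : ℝ)⁻¹)) ^ d := hpow.symm
    _ ≤ (∑ i : Fin d, (d : ℝ)⁻¹ * hH.eigenvalues i) ^ d :=
        pow_le_pow_left₀ hgm_nonneg hgm d
    _ = (A.trace / d) ^ d := by rw [hsum]

lemma log_det_gram {ν : ℝ} (hν : 0 < ν) (xs : ℕ → Fin d → ℝ) (T : ℕ) :
    Real.log (gramMatrix d ν xs (T+1)).det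
      = d * Real.log ν
        + ∑ t ∈ Finset.Icc 1 T,
            Real.log (1 + xs t ⬝ᵥ ((gramMatrix d ν xs t)⁻¹ *ᵥ xs t)) := by
  induction T with
  | zero => simp [gramMatrix, Matrix.det_smul, Real.log_pow]
  | succ n ih =>
      have hw := w_nonneg hν xs (n+1) (xs (n+1))
      rw [Finset.sum_Icc_succ_top (by omega), det_gram_succ hν xs (n+1) (by omega),
        Real.log_mul (gram_posDef hν xs (n+1)).det_pos.ne' (by linarith), ih]
      ring

lemma min_le_two_log (u : ℝ) (hu : 0 ≤ u) : min 1 u ≤ 2 * Real.log (1 + u) := by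
  have h1 : (0:ℝ) < 1 + u := by linarith
  have hlog : u / (1 + u) ≤ Real.log (1 + u) := by
    have he := Real.add_one_le_exp (-(u / (1+u)))
    have h2 : (1:ℝ)/(1+u) ≤ Real.exp (-(u/(1+u))) := by
      have heq : -(u/(1+u)) + 1 = 1/(1+u) := by field_simp; ring
      linarith
    have h3 : Real.log (1/(1+u)) ≤ -(u/(1+u)) := by
      calc Real.log (1/(1+u)) ≤ Real.log (Real.exp (-(u/(1+u)))) :=
            Real.log_le_log (by positivity) h2
        _ = _ := Real.log_exp _
    rw [one_div, Real.log_inv] at h3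
    linarith
  rcases le_total u 1 with h | h
  · rw [min_eq_right h]
    have : u ≤ 2 * (u/(1+u)) := by
      rw [mul_div_assoc', le_div_iff₀ h1]; nlinarith
    linarith
  · rw [min_eq_left h]
    have : (1:ℝ) ≤ 2 * (u/(1+u)) := by
      rw [mul_div_assoc', le_div_iff₀ h1]; nlinarith
    linarith

lemma trace_gram (ν : ℝ) (xs : ℕ → Fin d → ℝ) (T : ℕ) :
    (gramMatrix d ν xs (T+1)).trace
      = (∑ t ∈ Finset.Icc 1 T, ∑ j, (xs t j)^2) + d * ν := by
  unfold gramMatrix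
  rw [Matrix.trace_add, Matrix.trace_smul, Matrix.trace_one, Matrix.trace_sum,
    Nat.add_sub_cancel]
  simp only [Matrix.trace, Matrix.diag, Matrix.vecMulVec_apply, sq, smul_eq_mul,
    Fintype.card_fin]
  ring

lemma potential (hd : 0 < d) {ν K : ℝ} (hν : 0 < ν) (hK : 0 < K)
    (xs : ℕ → Fin d → ℝ) (T : ℕ)
    (hxs : ∀ i, 1 ≤ i → i ≤ T → (∑ j, (xs i j)^2) ≤ K^2) :
    ∑ t ∈ Finset.Icc 1 T, min 1 (xs t ⬝ᵥ ((gramMatrix d ν xs t)⁻¹ *ᵥ xs t))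
      ≤ 2 * d * Real.log (1 + T * K^2 / (d * ν)) := by
  set w : ℕ → ℝ := fun t => xs t ⬝ᵥ ((gramMatrix d ν xs t)⁻¹ *ᵥ xs t) with hw
  have step1 : ∑ t ∈ Finset.Icc 1 T, min 1 (w t)
      ≤ 2 * ∑ t ∈ Finset.Icc 1 T, Real.log (1 + w t) := by
    rw [Finset.mul_sum]
    exact Finset.sum_le_sum fun t _ => min_le_two_log (w t) (w_nonneg hν xs t (xs t))
  have htrace : (gramMatrix d ν xs (T+1)).trace ≤ T * K^2 + d * ν := by
    rw [trace_gram]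
    have : ∑ t ∈ Finset.Icc 1 T, ∑ j, (xs t j)^2 ≤ ∑ t ∈ Finset.Icc 1 T, K^2 :=
      Finset.sum_le_sum fun t ht => by
        rw [Finset.mem_Icc] at ht; exact hxs t ht.1 ht.2
    rw [Finset.sum_const, Nat.card_Icc] at this
    simp only [Nat.add_sub_cancel, nsmul_eq_mul] at this
    linarith
  have htrpos : (0:ℝ) < (gramMatrix d ν xs (T+1)).trace / d := by
    have h0 : (0:ℝ) < (gramMatrix d ν xs (T+1)).trace := by
      rw [trace_gram]
      have : (0:ℝ) ≤ ∑ t ∈ Finset.Icc 1 T, ∑ j, (xs t j)^2 :=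
        Finset.sum_nonneg fun t _ => Finset.sum_nonneg fun j _ => sq_nonneg _
      have hd' : (0:ℝ) < d := by exact_mod_cast hd
      nlinarith
    positivity
  have hlogdet : Real.log (gramMatrix d ν xs (T+1)).det
      ≤ d * Real.log (ν + T * K^2 / d) := by
    have hd' : (0:ℝ) < d := by exact_mod_cast hd
    calc Real.log (gramMatrix d ν xs (T+1)).det
        ≤ Real.log (((gramMatrix d ν xs (T+1)).trace / d) ^ d) :=
          Real.log_le_log (gram_posDef hν xs (T+1)).det_pos
            (det_le_trace_pow _ (gram_posDef hν xs (T+1)) hd)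
      _ = d * Real.log ((gramMatrix d ν xs (T+1)).trace / d) := by rw [Real.log_pow]
      _ ≤ d * Real.log (ν + T * K^2 / d) := by
          apply mul_le_mul_of_nonneg_left _ (by positivity)
          apply Real.log_le_log htrpos
          rw [div_le_iff₀ hd']
          rw [add_mul, div_mul_cancel₀ _ hd'.ne']
          linarith
  have hfin : ∑ t ∈ Finset.Icc 1 T, Real.log (1 + w t)
      ≤ d * Real.log (1 + T * K^2 / (d * ν)) := by
    have htel := log_det_gram hν xs T
    have harg : Real.log (ν + T * K^2 / d) - Real.log ν
        = Real.log (1 + T * K^2 / (d * ν)) := by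
      rw [← Real.log_div (by positivity) hν.ne']
      congr 1
      field_simp
    have heq : ∑ t ∈ Finset.Icc 1 T, Real.log (1 + w t)
        = Real.log (gramMatrix d ν xs (T+1)).det - d * Real.log ν := by
      rw [htel]; ring
    rw [heq, ← harg]
    have hd' : (0:ℝ) ≤ d := by positivity
    nlinarith [hlogdet]
  calc ∑ t ∈ Finset.Icc 1 T, min 1 (w t)
      ≤ 2 * ∑ t ∈ Finset.Icc 1 T, Real.log (1 + w t) := step1
    _ ≤ 2 * (d * Real.log (1 + T * K^2 / (d * ν))) := by linarith
    _ = 2 * d * Real.log (1 + T * K^2 / (d * ν)) := by ring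

lemma abs_dot_le_wnorm {ν : ℝ} (hν : 0 < ν) (xs : ℕ → Fin d → ℝ) (t : ℕ)
    (a b : Fin d → ℝ) :
    |a ⬝ᵥ b| ≤ wNorm d (gramMatrix d ν xs t) a
      * Real.sqrt (b ⬝ᵥ ((gramMatrix d ν xs t)⁻¹ *ᵥ b)) := by
  have hpd := gram_posDef hν xs t
  have hGc : gramMatrix d ν xs t *ᵥ ((gramMatrix d ν xs t)⁻¹ *ᵥ b) = b := by
    rw [Matrix.mulVec_mulVec,
      Matrix.mul_nonsing_inv _ (isUnit_iff_ne_zero.mpr hpd.det_pos.ne'), Matrix.one_mulVec]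
  have h2 : ((gramMatrix d ν xs t)⁻¹ *ᵥ b) ⬝ᵥ
        (gramMatrix d ν xs t *ᵥ ((gramMatrix d ν xs t)⁻¹ *ᵥ b))
      = b ⬝ᵥ ((gramMatrix d ν xs t)⁻¹ *ᵥ b) := by
    rw [hGc]; exact dotProduct_comm _ _
  calc |a ⬝ᵥ b| = |a ⬝ᵥ (gramMatrix d ν xs t *ᵥ ((gramMatrix d ν xs t)⁻¹ *ᵥ b))| := by
        rw [hGc]
    _ ≤ Real.sqrt (a ⬝ᵥ (gramMatrix d ν xs t *ᵥ a))
        * Real.sqrt (((gramMatrix d ν xs t)⁻¹ *ᵥ b) ⬝ᵥ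
            (gramMatrix d ν xs t *ᵥ ((gramMatrix d ν xs t)⁻¹ *ᵥ b))) :=
        abs_dot_le _ (gram_transpose ν xs t) (gram_psd_quad hν xs t) a _
    _ = wNorm d (gramMatrix d ν xs t) a * Real.sqrt (b ⬝ᵥ ((gramMatrix d ν xs t)⁻¹ *ᵥ b)) := by
        rw [h2]; rfl

lemma w_le_gen {ν lam' K : ℝ} (hν : 0 < ν) (hlam' : 0 < lam') (xs : ℕ → Fin d → ℝ)
    (t : ℕ) (b : Fin d → ℝ)
    (hlow : ∀ z : Fin d → ℝ, lam' * (∑ i, (z i)^2) ≤ z ⬝ᵥ (gramMatrix d ν xs t *ᵥ z))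
    (hb : (∑ i, (b i)^2) ≤ K^2) :
    b ⬝ᵥ ((gramMatrix d ν xs t)⁻¹ *ᵥ b) ≤ K^2 / lam' := by
  set c := (gramMatrix d ν xs t)⁻¹ *ᵥ b with hc
  have hpd := gram_posDef hν xs t
  have hGc : gramMatrix d ν xs t *ᵥ c = b := by
    rw [hc, Matrix.mulVec_mulVec,
      Matrix.mul_nonsing_inv _ (isUnit_iff_ne_zero.mpr hpd.det_pos.ne'), Matrix.one_mulVec]
  have hquad : c ⬝ᵥ (gramMatrix d ν xs t *ᵥ c) = b ⬝ᵥ c := by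
    rw [hGc, dotProduct_comm]
  have hlowc : lam' * (∑ i, (c i)^2) ≤ b ⬝ᵥ c := by
    rw [← hquad]; exact hlow c
  have hcnn : (0:ℝ) ≤ ∑ i, (c i)^2 := Finset.sum_nonneg fun i _ => sq_nonneg _
  have hw0 : 0 ≤ b ⬝ᵥ c := le_trans (by positivity) hlowc
  have hcs : (b ⬝ᵥ c)^2 ≤ K^2 * ∑ i, (c i)^2 := by
    have h := Finset.sum_mul_sq_le_sq_mul_sq Finset.univ b c
    have hbc : b ⬝ᵥ c = ∑ i, b i * c i := rfl
    rw [hbc]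
    calc (∑ i, b i * c i)^2 ≤ (∑ i, (b i)^2) * ∑ i, (c i)^2 := h
      _ ≤ K^2 * ∑ i, (c i)^2 := mul_le_mul_of_nonneg_right hb hcnn
  rw [le_div_iff₀ hlam']
  rcases hw0.lt_or_eq with hpos | hzero
  · nlinarith [hlowc, hcs]
  · rw [← hzero, zero_mul]; exact sq_nonneg K

lemma le_of_sq_le' {a b : ℝ} (ha : 0 ≤ a) (hb : 0 ≤ b) (h : a^2 ≤ b^2) : a ≤ b := by
  nlinarith

end AuxLemmas

theorem estimation_gap_bound
    (M d T T' : ℕ) (hM : 0 < M) (hd : 0 < d) (hT' : T' < T)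
    (K S L ν lam σ R : ℝ) (hK : 0 < K) (hS : 0 < S) (hL : 0 < L) (hν : 0 < ν)
    (hlam : 0 < lam) (hσ : 0 < σ) (hR : 0 ≤ R)
    (α : Fin M → ℝ) (hα : ∀ m, 0 < α m)
    (δ' : ℝ) (hδ' : δ' ∈ Set.Ioo (0 : ℝ) (1 / 2))
    (β : ℕ → Fin M → ℝ)
    (hβ : ∀ t m, β t m = Real.sqrt (R ^ 2 + (α m) ^ 2 * σ ^ 2)
        * Real.sqrt (d * Real.log ((1 + t * K ^ 2 / ν) * M / δ')) + S * Real.sqrt ν)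
    (Y : Set (Fin M → ℝ)) (hYcompact : IsCompact Y)
    (hYpoly : ∃ (P : ℕ) (A : Fin P → Fin M → ℝ) (bvec : Fin P → ℝ),
        Y = {y | ∀ p, ∑ m, A p m * y m ≤ bvec p})
    (Dm : Fin M → Set (Fin d → ℝ))
    (hDm : ∀ m, ∀ z ∈ Dm m, Real.sqrt (∑ i, (z i) ^ 2) ≤ K)
    (θs : Fin M → Fin d → ℝ) (hθs : ∀ m, Real.sqrt (∑ i, (θs m i) ^ 2) ≤ S)
    (f : (Fin M → ℝ) → ℝ)
    (hf : ∀ y y', |f y - f y'| ≤ L * Real.sqrt (∑ m, (y m - y' m) ^ 2))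
    (x : ℕ → Fin M → Fin d → ℝ)
    (hx : ∀ t, 1 ≤ t → t ≤ T → ∀ m, x t m ∈ Dm m)
    (u : ℕ → Fin M → ℝ)
    (Y' : Set (Fin M → ℝ)) (hY' : Y' = (fun y => fun m => y m / β T m) '' Y)
    (Xstar : Fin M → Fin d → ℝ)
    (hXstar : (∀ m, Xstar m ∈ Dm m) ∧ respVec M d θs Xstar ∈ Y ∧
      ∀ X : Fin M → Fin d → ℝ, (∀ m, X m ∈ Dm m) → respVec M d θs X ∈ Y →
        f (respVec M d θs X) ≤ f (respVec M d θs Xstar))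
    -- condition (i): the true parameter lies in every confidence set
    (hcond1 : ∀ t, T' < t → t ≤ T → θs ∈ confSet M d ν β x u t)
    -- condition (ii): eigenvalue lower bound on the Gram matrices
    (hcond2 : ∀ t, T' < t → t ≤ T → ∀ m, ∀ z : Fin d → ℝ,
      (ν + T' * lam / 2) * (∑ i, (z i) ^ 2)
        ≤ z ⬝ᵥ (gramMatrix d ν (fun i => x i m) t *ᵥ z))
    -- condition (iii): the shrinkage parameter is below the maximum shrinkage
    (hcond3 : 2 * Real.sqrt 2 * K / Real.sqrt (2 * ν + T' * lam)
        ≤ maxShrinkage M Y')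
    -- condition (iv): (X_t, Θ̃_t) is the optimistic choice
    (Θopt : ℕ → Fin M → Fin d → ℝ)
    (hcond4 : ∀ t, T' < t → t ≤ T →
      (fun m => x t m) ∈ safeSet M d Y Dm ν β x u t ∧
      Θopt t ∈ confSet M d ν β x u t ∧
      ∀ X ∈ safeSet M d Y Dm ν β x u t, ∀ Θ ∈ confSet M d ν β x u t,
        f (respVec M d Θ X) ≤ f (respVec M d (Θopt t) fun m => x t m)) :
    ∑ t ∈ Finset.Icc (T' + 1) T,
        (f (respVec M d (Θopt t) fun m => x t m)
          - f (respVec M d θs fun m => x t m))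
      ≤ L * max (maxShrinkage M Y') 2
          * Real.sqrt (2 * d * Real.log (1 + T * K ^ 2 / (d * ν))
              * ((T : ℝ) - T') * ∑ m, (β T m) ^ 2) := by
  obtain ⟨hδ'pos, hδ'lt⟩ := hδ'
  have hd' : (0:ℝ) < d := by exact_mod_cast hd
  have hM' : (1:ℝ) ≤ M := by exact_mod_cast hM
  set C := max (maxShrinkage M Y') 2 with hCdef
  have hC2 : (2:ℝ) ≤ C := le_max_right _ _
  have hC0 : (0:ℝ) ≤ C := by linarith
  have hβnn : ∀ t m, 0 ≤ β t m := by
    intro t m; rw [hβ]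
    have h1 := Real.sqrt_nonneg (R^2 + (α m)^2*σ^2)
    have h2 := Real.sqrt_nonneg ((d:ℝ) * Real.log ((1 + t*K^2/ν)*M/δ'))
    have h3 := Real.sqrt_nonneg ν
    nlinarith [hS.le]
  have hargpos : ∀ t : ℕ, (0:ℝ) < (1 + t*K^2/ν)*M/δ' := by
    intro t
    have h1 : (0:ℝ) < 1 + t*K^2/ν := by
      have : (0:ℝ) ≤ (t:ℝ)*K^2/ν := by positivity
      linarith
    have hM0 : (0:ℝ) < M := by linarith
    exact div_pos (mul_pos h1 hM0) hδ'pos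
  have hβmono : ∀ t m, t ≤ T → β t m ≤ β T m := by
    intro t m ht; rw [hβ, hβ]
    apply add_le_add_left
    apply mul_le_mul_of_nonneg_left _ (Real.sqrt_nonneg _)
    apply Real.sqrt_le_sqrt
    apply mul_le_mul_of_nonneg_left _ hd'.le
    apply Real.log_le_log (hargpos t)
    have htT : (t:ℝ) ≤ (T:ℝ) := by exact_mod_cast ht
    have h2 : (1:ℝ) + t*K^2/ν ≤ 1 + T*K^2/ν := by
      have : (t:ℝ)*K^2/ν ≤ (T:ℝ)*K^2/ν :=
        div_le_div_of_nonneg_right (mul_le_mul_of_nonneg_right htT (sq_nonneg K)) hν.le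
      linarith
    have hM0 : (0:ℝ) ≤ M := by linarith
    exact div_le_div_of_nonneg_right (mul_le_mul_of_nonneg_right h2 hM0) hδ'pos.le
  have hxsq : ∀ m, ∀ i, 1 ≤ i → i ≤ T → (∑ j, (x i m j)^2) ≤ K^2 := by
    intro m i h1 h2
    have h := hDm m _ (hx i h1 h2 m)
    have hnn : 0 ≤ ∑ j, (x i m j)^2 := Finset.sum_nonneg fun j _ => sq_nonneg _
    nlinarith [Real.sq_sqrt hnn, Real.sqrt_nonneg (∑ j, (x i m j)^2)]
  set wq : ℕ → Fin M → ℝ :=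
    fun t m => x t m ⬝ᵥ ((gramMatrix d ν (fun i => x i m) t)⁻¹ *ᵥ x t m) with hwqdef
  have hwqnn : ∀ t m, 0 ≤ wq t m := fun t m => w_nonneg hν _ t _
  set P := 2*(d:ℝ)*Real.log (1 + T*K^2/((d:ℝ)*ν)) with hPdef
  have hpot : ∀ m, ∑ t ∈ Finset.Icc (T'+1) T, min 1 (wq t m) ≤ P := by
    intro m
    calc ∑ t ∈ Finset.Icc (T'+1) T, min 1 (wq t m)
        ≤ ∑ t ∈ Finset.Icc 1 T, min 1 (wq t m) := by
          apply Finset.sum_le_sum_of_subset_of_nonneg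
          · exact Finset.Icc_subset_Icc (by omega) le_rfl
          · intro t _ _; exact le_min zero_le_one (hwqnn t m)
      _ ≤ P := potential hd hν hK (fun i => x i m) T (hxsq m)
  have hPnn : 0 ≤ P := by
    have h1 : (0:ℝ) ≤ (T:ℝ)*K^2/((d:ℝ)*ν) := by positivity
    have h2 := Real.log_nonneg (by linarith : (1:ℝ) ≤ 1 + T*K^2/((d:ℝ)*ν))
    rw [hPdef]
    positivity
  -- key componentwise bound
  have hkey : ∀ t, T' < t → t ≤ T → ∀ m,
      |(Θopt t m - θs m) ⬝ᵥ x t m| ≤ C * β T m * min 1 (Real.sqrt (wq t m)) := by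
    intro t ht1 ht2 m
    have hconfΘ : ∀ m', wNorm d (gramMatrix d ν (fun i => x i m') t)
        (Θopt t m' - rlsEstimate d ν (fun i => x i m') (fun i => u i m') t) ≤ β t m' :=
      (hcond4 t ht1 ht2).2.1
    have hconfθ : ∀ m', wNorm d (gramMatrix d ν (fun i => x i m') t)
        (θs m' - rlsEstimate d ν (fun i => x i m') (fun i => u i m') t) ≤ β t m' :=
      hcond1 t ht1 ht2
    have htri : wNorm d (gramMatrix d ν (fun i => x i m) t) (Θopt t m - θs m)
        ≤ 2 * β t m := by
      have hsplit : Θopt t m - θs m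
          = (Θopt t m - rlsEstimate d ν (fun i => x i m) (fun i => u i m) t)
            + -(θs m - rlsEstimate d ν (fun i => x i m) (fun i => u i m) t) := by
        abel
      rw [hsplit]
      calc wNorm d (gramMatrix d ν (fun i => x i m) t) _
          ≤ wNorm d (gramMatrix d ν (fun i => x i m) t)
              (Θopt t m - rlsEstimate d ν (fun i => x i m) (fun i => u i m) t)
            + wNorm d (gramMatrix d ν (fun i => x i m) t)
              (-(θs m - rlsEstimate d ν (fun i => x i m) (fun i => u i m) t)) :=
            wNorm_add_le _ (gram_transpose ν _ t) (gram_psd_quad hν _ t) _ _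
        _ = wNorm d (gramMatrix d ν (fun i => x i m) t)
              (Θopt t m - rlsEstimate d ν (fun i => x i m) (fun i => u i m) t)
            + wNorm d (gramMatrix d ν (fun i => x i m) t)
              (θs m - rlsEstimate d ν (fun i => x i m) (fun i => u i m) t) := by
            rw [wNorm_neg]
        _ ≤ β t m + β t m := add_le_add (hconfΘ m) (hconfθ m)
        _ = 2 * β t m := by ring
    have habs : |(Θopt t m - θs m) ⬝ᵥ x t m| ≤ 2 * β t m * Real.sqrt (wq t m) := by
      calc |(Θopt t m - θs m) ⬝ᵥ x t m|
          ≤ wNorm d (gramMatrix d ν (fun i => x i m) t) (Θopt t m - θs m)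
            * Real.sqrt (wq t m) :=
            abs_dot_le_wnorm hν (fun i => x i m) t _ _
        _ ≤ 2 * β t m * Real.sqrt (wq t m) :=
            mul_le_mul_of_nonneg_right htri (Real.sqrt_nonneg _)
    have hβt : β t m ≤ β T m := hβmono t m ht2
    have hsnn := Real.sqrt_nonneg (wq t m)
    rcases le_total (Real.sqrt (wq t m)) 1 with hle | hgt
    · rw [min_eq_right hle]
      calc |(Θopt t m - θs m) ⬝ᵥ x t m| ≤ 2 * β t m * Real.sqrt (wq t m) := habs
        _ ≤ C * β T m * Real.sqrt (wq t m) := by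
            apply mul_le_mul_of_nonneg_right _ hsnn
            calc 2 * β t m ≤ 2 * β T m := by linarith
              _ ≤ C * β T m := mul_le_mul_of_nonneg_right hC2 (hβnn T m)
    · rw [min_eq_left hgt]
      have hlam' : (0:ℝ) < ν + T'*lam/2 := by positivity
      have hwle : wq t m ≤ K^2/(ν + T'*lam/2) :=
        w_le_gen hν hlam' (fun i => x i m) t (x t m) (hcond2 t ht1 ht2 m)
          (hxsq m t (by omega) ht2)
      have hX : (0:ℝ) < 2*ν + T'*lam := by positivity
      have h2s : 2 * Real.sqrt (wq t m)
          ≤ 2*Real.sqrt 2*K/Real.sqrt (2*ν+(T':ℝ)*lam) := by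
        apply le_of_sq_le' (by positivity) (by positivity)
        have e1 : (2*Real.sqrt (wq t m))^2 = 4 * wq t m := by
          rw [mul_pow, Real.sq_sqrt (hwqnn t m)]; ring
        have e2 : (2*Real.sqrt 2*K/Real.sqrt (2*ν+(T':ℝ)*lam))^2
            = 8*K^2/(2*ν+(T':ℝ)*lam) := by
          rw [div_pow, mul_pow, mul_pow, Real.sq_sqrt (by norm_num : (0:ℝ) ≤ 2),
            Real.sq_sqrt hX.le]
          ring
        rw [e1, e2]
        have hEq : K^2/(ν+(T':ℝ)*lam/2) = 2*K^2/(2*ν+(T':ℝ)*lam) := by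
          rw [div_eq_div_iff hlam'.ne' hX.ne']; ring
        rw [hEq] at hwle
        rw [show (8:ℝ)*K^2/(2*ν+(T':ℝ)*lam) = 4*(2*K^2/(2*ν+(T':ℝ)*lam)) by ring]
        linarith
      have hCb : 2 * Real.sqrt (wq t m) ≤ C :=
        le_trans h2s (le_trans hcond3 (le_max_left _ _))
      calc |(Θopt t m - θs m) ⬝ᵥ x t m| ≤ 2 * β t m * Real.sqrt (wq t m) := habs
        _ = β t m * (2 * Real.sqrt (wq t m)) := by ring
        _ ≤ β T m * C := by
            apply mul_le_mul hβt hCb (by positivity) (hβnn T m)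
        _ = C * β T m * 1 := by ring
  -- per-round bound
  set a : ℕ → ℝ := fun t => ∑ m, (β T m)^2 * min 1 (wq t m) with hadef
  have hann : ∀ t, 0 ≤ a t := fun t =>
    Finset.sum_nonneg fun m _ => mul_nonneg (sq_nonneg _) (le_min zero_le_one (hwqnn t m))
  have hgap : ∀ t ∈ Finset.Icc (T'+1) T,
      f (respVec M d (Θopt t) fun m => x t m) - f (respVec M d θs fun m => x t m)
        ≤ L * C * Real.sqrt (a t) := by
    intro t ht
    rw [Finset.mem_Icc] at ht
    have ht1 : T' < t := by omega
    have ht2 : t ≤ T := ht.2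
    have hsum : ∑ m, ((respVec M d (Θopt t) fun m => x t m) m
        - (respVec M d θs fun m => x t m) m)^2 ≤ C^2 * a t := by
      rw [hadef]
      simp only
      rw [Finset.mul_sum]
      apply Finset.sum_le_sum
      intro m _
      have hcm := hkey t ht1 ht2 m
      have hdiffeq : (respVec M d (Θopt t) fun m => x t m) m
          - (respVec M d θs fun m => x t m) m = (Θopt t m - θs m) ⬝ᵥ x t m := by
        simp [respVec, sub_dotProduct]
      rw [hdiffeq]
      have hminsq : (min 1 (Real.sqrt (wq t m)))^2 = min 1 (wq t m) := by
        rcases le_total (Real.sqrt (wq t m)) 1 with h | h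
        · rw [min_eq_right h, Real.sq_sqrt (hwqnn t m), min_eq_right]
          nlinarith [Real.sq_sqrt (hwqnn t m), Real.sqrt_nonneg (wq t m)]
        · rw [min_eq_left h, min_eq_left, one_pow]
          nlinarith [Real.sq_sqrt (hwqnn t m), Real.sqrt_nonneg (wq t m)]
      calc ((Θopt t m - θs m) ⬝ᵥ x t m)^2
          = |(Θopt t m - θs m) ⬝ᵥ x t m|^2 := (sq_abs _).symm
        _ ≤ (C * β T m * min 1 (Real.sqrt (wq t m)))^2 :=
            pow_le_pow_left₀ (abs_nonneg _) hcm 2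
        _ = C^2 * ((β T m)^2 * min 1 (wq t m)) := by
            rw [mul_pow, mul_pow, hminsq]; ring
    calc f (respVec M d (Θopt t) fun m => x t m) - f (respVec M d θs fun m => x t m)
        ≤ |f (respVec M d (Θopt t) fun m => x t m)
            - f (respVec M d θs fun m => x t m)| := le_abs_self _
      _ ≤ L * Real.sqrt (∑ m, ((respVec M d (Θopt t) fun m => x t m) m
            - (respVec M d θs fun m => x t m) m)^2) := hf _ _
      _ ≤ L * Real.sqrt (C^2 * a t) :=
          mul_le_mul_of_nonneg_left (Real.sqrt_le_sqrt hsum) hL.le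
      _ = L * (C * Real.sqrt (a t)) := by
          rw [Real.sqrt_mul (sq_nonneg C), Real.sqrt_sq hC0]
      _ = L * C * Real.sqrt (a t) := by ring
  have hsum1 : ∑ t ∈ Finset.Icc (T'+1) T,
      (f (respVec M d (Θopt t) fun m => x t m) - f (respVec M d θs fun m => x t m))
      ≤ L * C * ∑ t ∈ Finset.Icc (T'+1) T, Real.sqrt (a t) := by
    rw [Finset.mul_sum]
    exact Finset.sum_le_sum hgap
  have hcard : (((Finset.Icc (T'+1) T).card : ℕ) : ℝ) = (T:ℝ) - T' := by
    rw [Nat.card_Icc]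
    have h1 : T + 1 - (T'+1) = T - T' := by omega
    rw [h1, Nat.cast_sub hT'.le]
  have hcs : ∑ t ∈ Finset.Icc (T'+1) T, Real.sqrt (a t)
      ≤ Real.sqrt (((T:ℝ) - T') * ∑ t ∈ Finset.Icc (T'+1) T, a t) := by
    have h := Finset.sum_mul_sq_le_sq_mul_sq (Finset.Icc (T'+1) T)
      (fun _ => (1:ℝ)) (fun t => Real.sqrt (a t))
    simp only [one_mul, one_pow] at h
    have h3 : ∑ t ∈ Finset.Icc (T'+1) T, (Real.sqrt (a t))^2
        = ∑ t ∈ Finset.Icc (T'+1) T, a t :=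
      Finset.sum_congr rfl fun t _ => Real.sq_sqrt (hann t)
    rw [h3, Finset.sum_const, nsmul_eq_mul, mul_one] at h
    have hnn : 0 ≤ ∑ t ∈ Finset.Icc (T'+1) T, Real.sqrt (a t) :=
      Finset.sum_nonneg fun t _ => Real.sqrt_nonneg _
    calc ∑ t ∈ Finset.Icc (T'+1) T, Real.sqrt (a t)
        = Real.sqrt ((∑ t ∈ Finset.Icc (T'+1) T, Real.sqrt (a t))^2) :=
          (Real.sqrt_sq hnn).symm
      _ ≤ Real.sqrt (((T:ℝ) - T') * ∑ t ∈ Finset.Icc (T'+1) T, a t) := by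
          apply Real.sqrt_le_sqrt
          rw [← hcard]
          exact h
  have hsa : ∑ t ∈ Finset.Icc (T'+1) T, a t ≤ P * ∑ m, (β T m)^2 := by
    calc ∑ t ∈ Finset.Icc (T'+1) T, a t
        = ∑ m, ∑ t ∈ Finset.Icc (T'+1) T, (β T m)^2 * min 1 (wq t m) := by
          simp only [hadef]
          exact Finset.sum_comm
      _ ≤ ∑ m, (β T m)^2 * P := by
          apply Finset.sum_le_sum
          intro m _
          rw [← Finset.mul_sum]
          exact mul_le_mul_of_nonneg_left (hpot m) (sq_nonneg _)
      _ = P * ∑ m, (β T m)^2 := by rw [← Finset.sum_mul, mul_comm]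
  have hTT' : (0:ℝ) ≤ (T:ℝ) - T' := by
    have : (T':ℝ) ≤ T := by exact_mod_cast hT'.le
    linarith
  calc ∑ t ∈ Finset.Icc (T'+1) T,
        (f (respVec M d (Θopt t) fun m => x t m) - f (respVec M d θs fun m => x t m))
      ≤ L * C * ∑ t ∈ Finset.Icc (T'+1) T, Real.sqrt (a t) := hsum1
    _ ≤ L * C * Real.sqrt (((T:ℝ) - T') * ∑ t ∈ Finset.Icc (T'+1) T, a t) :=
        mul_le_mul_of_nonneg_left hcs (mul_nonneg hL.le hC0)
    _ ≤ L * C * Real.sqrt (((T:ℝ) - T') * (P * ∑ m, (β T m)^2)) := by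
        apply mul_le_mul_of_nonneg_left _ (mul_nonneg hL.le hC0)
        apply Real.sqrt_le_sqrt
        exact mul_le_mul_of_nonneg_left hsa hTT'
    _ = L * C * Real.sqrt (2 * d * Real.log (1 + T * K ^ 2 / (d * ν))
          * ((T : ℝ) - T') * ∑ m, (β T m) ^ 2) := by
        rw [hPdef]
        congr 1
        rw [show ((T:ℝ) - T') * (2*(d:ℝ)*Real.log (1 + T*K^2/((d:ℝ)*ν)) * ∑ m, (β T m)^2)
          = 2 * (d:ℝ) * Real.log (1 + T * K ^ 2 / ((d:ℝ) * ν))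
            * ((T : ℝ) - T') * ∑ m, (β T m) ^ 2 by ring]
end

section
/- Fix an integer M ≥ 1, a positive integer d, constants K, ν, S, σ, L, λ̌ > 0, δ' ∈ (0, 1/2), R ≥ 0, positive reals c_1,…,c_M, and α_1,…,α_M ≥ 0 with R² + α_m²σ² > 0 for every m; let α̃ := max_m α_m. For integers T ≥ 2 define: β_{T,m} := √( d (R² + α_m²σ²) ln((1 + TK²/ν)·M/δ') ) + S√ν; β̃_T := max_m β_{T,m}; q'_T := Σ_{m=1}^M β_{T,m}/c_m; ρ̃_T := max_m c_m/β_{T,m}; t_{δ'} := (8K²/λ̌) ln(d/δ'); t'_h(T) := 32K² (q'_T)²/λ̌ − 2ν/λ̌; T'(T) := max( t'_h(T), t_{δ'}, (2/λ̌)(β̃_T T)^{2/3} ); and r(T,a) := 2LKS√M · T'(T) + L (T − T'(T)) · (2√2 K β̃_T / √(2ν + λ̌ T'(T))) · √((M−1) + (2 q'_T ρ̃_T − 1)²) + L · max(1/(2 q'_T), 2) · √( 2d ln(1 + TK²/(dν)) (T − T'(T)) Σ_{m=1}^M β_{T,m}² ). Then lim_{T→∞} r(T,a) / (T² ln T)^{1/3}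 = 2LK ( d(R² + α̃²σ²) )^{1/3} · ( 2S√M/λ̌ + √((M−1) + (2 f(a) − 1)²) ), where f(a) := max_{m ∈ [M]} Σ_{m'=1}^{M} ( c_m √(R² + α_{m'}² σ²) ) / ( c_{m'} √(R² + α_m² σ²) ). -/
open Finset Filter Real

private lemma aux_log_affine {c0 c1 : ℝ} (h0 : 0 < c0) (h1 : 0 < c1) :
    Tendsto (fun T : ℕ => Real.log (c0 + c1 * T) / Real.log T) atTop (nhds 1) := by
  have h2 : Tendsto (fun x : ℝ => Real.log (c0 + c1 * x) / Real.log x) atTop (nhds 1) := by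
    have h3 : Tendsto (fun x : ℝ => c1 + c0 / x) atTop (nhds (c1 + 0)) :=
      tendsto_const_nhds.add (tendsto_const_nhds.div_atTop tendsto_id)
    rw [add_zero] at h3
    have h4 : Tendsto (fun x : ℝ => Real.log (c1 + c0 / x)) atTop (nhds (Real.log c1)) :=
      ((Real.continuousAt_log h1.ne').tendsto).comp h3
    have h5 : Tendsto (fun x : ℝ => 1 + Real.log (c1 + c0 / x) / Real.log x) atTop
        (nhds (1 + 0)) :=
      tendsto_const_nhds.add (h4.div_atTop Real.tendsto_log_atTop)
    rw [add_zero] at h5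
    refine h5.congr' ?_
    filter_upwards [eventually_gt_atTop 1] with x hx
    have hx0 : (0:ℝ) < x := lt_trans one_pos hx
    have hlx : 0 < Real.log x := Real.log_pos hx
    have hcc : 0 < c1 + c0 / x := by positivity
    have hx1 : c0 + c1 * x = x * (c1 + c0 / x) := by field_simp; ring
    rw [hx1, Real.log_mul hx0.ne' hcc.ne', add_div, div_self hlx.ne']
  exact h2.comp tendsto_natCast_atTop_atTop

private lemma aux_sqrt_atTop : Tendsto Real.sqrt atTop atTop := by
  have := tendsto_rpow_atTop (by norm_num : (0:ℝ) < 1/2)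
  exact this.congr fun x => (Real.sqrt_eq_rpow _).symm

set_option maxHeartbeats 1000000 in
/-- The regret bound of Safe-Private Lin-UCB on the simplex safe set is of order
`T^{2/3} (ln T)^{1/3}`, with leading constant
`2LK (d(R² + α̃²σ²))^{1/3} (2S√M/λ̌ + √((M−1) + (2 f(a) − 1)²))`. -/
theorem regret_bound_asymptotics
    (M d : ℕ) [NeZero M] (hd : 0 < d)
    (K ν S σ L lam R : ℝ) (hK : 0 < K) (hν : 0 < ν) (hS : 0 < S) (hσ : 0 < σ)
    (hL : 0 < L) (hlam : 0 < lam) (hR : 0 ≤ R)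
    (δ' : ℝ) (hδ' : δ' ∈ Set.Ioo (0 : ℝ) (1 / 2))
    (c : Fin M → ℝ) (hc : ∀ m, 0 < c m)
    (α : Fin M → ℝ) (hα : ∀ m, 0 ≤ α m)
    (hvar : ∀ m, 0 < R ^ 2 + (α m) ^ 2 * σ ^ 2)
    (β : ℕ → Fin M → ℝ)
    (hβ : ∀ (T : ℕ) (m : Fin M), β T m
      = Real.sqrt (d * (R ^ 2 + (α m) ^ 2 * σ ^ 2)
          * Real.log ((1 + T * K ^ 2 / ν) * M / δ')) + S * Real.sqrt ν)
    (βmax : ℕ → ℝ) (hβmax : ∀ T, βmax T = ⨆ m, β T m)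
    (q' : ℕ → ℝ) (hq' : ∀ T, q' T = ∑ m, β T m / c m)
    (ρmax : ℕ → ℝ) (hρmax : ∀ T, ρmax T = ⨆ m, c m / β T m)
    (tδ : ℝ) (htδ : tδ = (8 * K ^ 2 / lam) * Real.log (d / δ'))
    (th : ℕ → ℝ) (hth : ∀ T, th T = 32 * K ^ 2 * (q' T) ^ 2 / lam - 2 * ν / lam)
    (T' : ℕ → ℝ)
    (hT' : ∀ T, T' T
      = max (th T) (max tδ ((2 / lam) * (βmax T * T) ^ ((2 : ℝ) / 3))))
    (r : ℕ → ℝ)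
    (hr : ∀ T : ℕ, r T
      = 2 * L * K * S * Real.sqrt M * T' T
        + L * ((T : ℝ) - T' T)
            * (2 * Real.sqrt 2 * K * βmax T / Real.sqrt (2 * ν + lam * T' T))
            * Real.sqrt ((M - 1) + (2 * q' T * ρmax T - 1) ^ 2)
        + L * max (1 / (2 * q' T)) 2
            * Real.sqrt (2 * d * Real.log (1 + T * K ^ 2 / (d * ν))
                * ((T : ℝ) - T' T) * ∑ m, (β T m) ^ 2)) :
    Tendsto (fun T : ℕ => r T / ((T : ℝ) ^ 2 * Real.log T) ^ ((1 : ℝ) / 3)) atTop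
      (nhds (2 * L * K * (d * (R ^ 2 + (⨆ m, α m) ^ 2 * σ ^ 2)) ^ ((1 : ℝ) / 3)
        * (2 * S * Real.sqrt M / lam
          + Real.sqrt ((M - 1) +
              (2 * (⨆ m, ∑ m', (c m * Real.sqrt (R ^ 2 + (α m') ^ 2 * σ ^ 2))
                / (c m' * Real.sqrt (R ^ 2 + (α m) ^ 2 * σ ^ 2))) - 1) ^ 2)))) := by
  haveI : Nonempty (Fin M) := ⟨⟨0, Nat.pos_of_ne_zero (NeZero.ne M)⟩⟩
  obtain ⟨hδ0, hδhalf⟩ := hδ'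
  have hM1 : (1:ℝ) ≤ M := by exact_mod_cast Nat.one_le_iff_ne_zero.mpr (NeZero.ne M)
  have hd0 : (0:ℝ) < d := by exact_mod_cast hd
  obtain ⟨V, hV⟩ : ∃ V : Fin M → ℝ, ∀ m, V m = R ^ 2 + α m ^ 2 * σ ^ 2 := ⟨_, fun _ => rfl⟩
  obtain ⟨b, hb⟩ : ∃ b : Fin M → ℝ, ∀ m, b m = Real.sqrt (d * V m) := ⟨_, fun _ => rfl⟩
  obtain ⟨l, hldef⟩ : ∃ l : ℕ → ℝ, ∀ T, l T = Real.log T := ⟨_, fun _ => rfl⟩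
  obtain ⟨p, hpdef⟩ : ∃ p : ℕ → ℝ, ∀ T, p T = (T:ℝ) ^ ((2:ℝ)/3) * l T ^ ((1:ℝ)/3) :=
    ⟨_, fun _ => rfl⟩
  have hVpos : ∀ m, 0 < V m := fun m => by rw [hV]; exact hvar m
  have hbpos : ∀ m, 0 < b m := fun m => by
    rw [hb]; exact Real.sqrt_pos.mpr (mul_pos hd0 (hVpos m))
  have hl : Tendsto l atTop atTop := by
    have := Real.tendsto_log_atTop.comp (tendsto_natCast_atTop_atTop (R := ℝ))
    exact this.congr fun T => (hldef T).symm
  have hsqrtl : Tendsto (fun T : ℕ => Real.sqrt (l T)) atTop atTop := aux_sqrt_atTop.comp hl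
  have hev : ∀ᶠ T : ℕ in atTop, (2:ℝ) ≤ (T:ℝ) := by
    filter_upwards [eventually_ge_atTop 2] with T hT
    exact_mod_cast hT
  have hevl : ∀ᶠ T : ℕ in atTop, 0 < l T := by
    filter_upwards [hev] with T hT
    rw [hldef]; exact Real.log_pos (by linarith)
  -- positivity of the log term in β
  have hwpos : ∀ T : ℕ, 0 < Real.log ((1 + T * K ^ 2 / ν) * M / δ') := by
    intro T
    apply Real.log_pos
    have hx : (0:ℝ) ≤ (T:ℝ) * K^2/ν := by positivity
    have h2 : (1:ℝ) ≤ (1 + (T:ℝ)*K^2/ν) * M := by nlinarith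
    rw [lt_div_iff₀ hδ0]
    nlinarith
  have hβpos : ∀ (T : ℕ) m, 0 < β T m := by
    intro T m; rw [hβ]
    have h1 : 0 < S * Real.sqrt ν := by positivity
    have h2 := Real.sqrt_nonneg ((d:ℝ) * (R^2 + α m^2*σ^2)
      * Real.log ((1 + T * K ^ 2 / ν) * M / δ'))
    linarith
  have hqpos : ∀ T, 0 < q' T := by
    intro T; rw [hq']
    exact Finset.sum_pos (fun m _ => div_pos (hβpos T m) (hc m)) univ_nonempty
  -- the log ratio limit
  have hwl : Tendsto (fun T : ℕ => Real.log ((1 + T * K ^ 2 / ν) * M / δ') / l T)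
      atTop (nhds 1) := by
    have h0 : (0:ℝ) < M / δ' := by positivity
    have h1 : (0:ℝ) < K^2 * M / (ν * δ') := by positivity
    have h2 := aux_log_affine h0 h1
    refine h2.congr fun T => ?_
    rw [hldef]
    congr 2
    field_simp
  -- β limits
  have hβl : ∀ m, Tendsto (fun T : ℕ => β T m / Real.sqrt (l T)) atTop (nhds (b m)) := by
    intro m
    have h1 : Tendsto (fun T : ℕ =>
        Real.sqrt ((d:ℝ) * V m * (Real.log ((1 + T * K ^ 2 / ν) * M / δ') / l T))
          + S * Real.sqrt ν / Real.sqrt (l T)) atTop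
        (nhds (Real.sqrt ((d:ℝ) * V m * 1) + 0)) :=
      Tendsto.add (Tendsto.sqrt (tendsto_const_nhds.mul hwl))
        (tendsto_const_nhds.div_atTop hsqrtl)
    rw [mul_one, add_zero] at h1
    rw [hb]
    refine h1.congr' ?_
    filter_upwards [hevl] with T hT
    rw [hβ, hV, add_div]
    congr 1
    rw [← Real.sqrt_div (mul_nonneg (by positivity) (hwpos T).le)]
    congr 1
    ring
  -- argmax
  obtain ⟨m₀, hm₀⟩ := Finite.exists_max α
  have hsupα : (⨆ m, α m) = α m₀ :=
    le_antisymm (ciSup_le hm₀) (le_ciSup (Set.Finite.bddAbove (Set.finite_range α)) m₀)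
  have hβle : ∀ (T : ℕ) m, β T m ≤ β T m₀ := by
    intro T m
    rw [hβ, hβ]
    have hVle' : R^2 + α m^2*σ^2 ≤ R^2 + α m₀^2*σ^2 := by
      have := mul_le_mul_of_nonneg_right (pow_le_pow_left₀ (hα m) (hm₀ m) 2) (sq_nonneg σ)
      linarith
    have h2 : (d:ℝ)*(R^2+α m^2*σ^2)*Real.log ((1 + T * K ^ 2 / ν) * M / δ')
        ≤ (d:ℝ)*(R^2+α m₀^2*σ^2)*Real.log ((1 + T * K ^ 2 / ν) * M / δ') :=
      mul_le_mul_of_nonneg_right (mul_le_mul_of_nonneg_left hVle' (Nat.cast_nonneg d))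
        (hwpos T).le
    exact add_le_add (Real.sqrt_le_sqrt h2) le_rfl
  have hβmaxeq : ∀ T, βmax T = β T m₀ := by
    intro T
    rw [hβmax]
    exact le_antisymm (ciSup_le (hβle T))
      (le_ciSup (Set.Finite.bddAbove (Set.finite_range _)) m₀)
  have hvlim : Tendsto (fun T : ℕ => βmax T / Real.sqrt (l T)) atTop (nhds (b m₀)) :=
    (hβl m₀).congr fun T => by rw [hβmaxeq]
  -- q' limit
  obtain ⟨Q, hQdef⟩ : ∃ Q : ℝ, Q = ∑ m, b m / c m := ⟨_, rfl⟩
  have hQpos : 0 < Q := hQdef ▸ Finset.sum_pos (fun m _ => div_pos (hbpos m) (hc m)) univ_nonempty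
  have hqlim : Tendsto (fun T : ℕ => q' T / Real.sqrt (l T)) atTop (nhds Q) := by
    rw [hQdef]
    have h1 : Tendsto (fun T : ℕ => ∑ m, (β T m / Real.sqrt (l T)) / c m) atTop
        (nhds (∑ m, b m / c m)) :=
      tendsto_finset_sum _ fun m _ => (hβl m).div_const (c m)
    refine h1.congr fun T => ?_
    rw [hq', Finset.sum_div]
    exact Finset.sum_congr rfl fun m _ => div_right_comm _ _ _
  have hqtop : Tendsto q' atTop atTop := by
    have h1 : Tendsto (fun T : ℕ => (q' T / Real.sqrt (l T)) * Real.sqrt (l T)) atTop atTop :=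
      hqlim.pos_mul_atTop hQpos hsqrtl
    refine h1.congr' ?_
    filter_upwards [hevl] with T hT
    exact div_mul_cancel₀ _ (Real.sqrt_ne_zero'.mpr hT)
  -- q' * ρmax limit
  obtain ⟨F, hF⟩ : ∃ F : Fin M → ℝ, ∀ m, F m = ∑ m',
      (c m * Real.sqrt (R ^ 2 + (α m') ^ 2 * σ ^ 2))
        / (c m' * Real.sqrt (R ^ 2 + (α m) ^ 2 * σ ^ 2)) := ⟨_, fun _ => rfl⟩
  have hsummand : ∀ m m' : Fin M, Tendsto (fun T : ℕ => (β T m' / c m') * (c m / β T m)) atTop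
      (nhds ((c m * Real.sqrt (R ^ 2 + (α m') ^ 2 * σ ^ 2))
        / (c m' * Real.sqrt (R ^ 2 + (α m) ^ 2 * σ ^ 2)))) := by
    intro m m'
    have hratio : Tendsto (fun T : ℕ => β T m' / β T m) atTop (nhds (b m' / b m)) := by
      have h1 := (hβl m').div (hβl m) (hbpos m).ne'
      refine h1.congr' ?_
      filter_upwards [hevl] with T hT
      have hs := Real.sqrt_ne_zero'.mpr hT
      simp only [Pi.div_apply]
      field_simp
    have h2 := (tendsto_const_nhds (x := c m / c m') (f := atTop (α := ℕ))).mul hratio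
    have hval : (c m / c m') * (b m' / b m)
        = (c m * Real.sqrt (R ^ 2 + (α m') ^ 2 * σ ^ 2))
          / (c m' * Real.sqrt (R ^ 2 + (α m) ^ 2 * σ ^ 2)) := by
      rw [hb, hb, hV, hV, Real.sqrt_mul (Nat.cast_nonneg d), Real.sqrt_mul (Nat.cast_nonneg d)]
      have h3 : Real.sqrt d ≠ 0 := Real.sqrt_ne_zero'.mpr hd0
      have h4 : Real.sqrt (R^2 + α m^2*σ^2) ≠ 0 := Real.sqrt_ne_zero'.mpr (hvar m)
      have h5 : Real.sqrt (R^2 + α m'^2*σ^2) ≠ 0 := Real.sqrt_ne_zero'.mpr (hvar m')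
      have h6 := (hc m).ne'
      have h7 := (hc m').ne'
      field_simp
    rw [← hval]
    refine h2.congr fun T => ?_
    ring
  have hsupm : ∀ m, Tendsto (fun T : ℕ => q' T * (c m / β T m)) atTop (nhds (F m)) := by
    intro m
    have h1 : Tendsto (fun T : ℕ => ∑ m', (β T m' / c m') * (c m / β T m)) atTop (nhds (F m)) := by
      rw [hF]
      exact tendsto_finset_sum _ fun m' _ => hsummand m m'
    refine h1.congr fun T => ?_
    rw [hq', Finset.sum_mul]
  have hρlim : Tendsto (fun T : ℕ => q' T * ρmax T) atTop (nhds (⨆ m, F m)) := by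
    have h1 : Tendsto (fun T : ℕ => Finset.univ.sup' univ_nonempty
        (fun m => q' T * (c m / β T m))) atTop (nhds (Finset.univ.sup' univ_nonempty F)) :=
      Filter.Tendsto.finset_sup'_nhds_apply _ fun m _ => hsupm m
    rw [← Finset.sup'_univ_eq_ciSup]
    refine h1.congr fun T => ?_
    rw [hρmax, ← Finset.sup'_univ_eq_ciSup]
    exact (Finset.comp_sup'_eq_sup'_comp _ (fun x => q' T * x)
      (fun x y => mul_max_of_nonneg x y (hqpos T).le)).symm
  -- little-o facts
  have hLO : ∀ s r : ℝ, 0 < r → Tendsto (fun T : ℕ => l T ^ s / (T:ℝ) ^ r) atTop (nhds 0) := by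
    intro s r hr
    have h1 := (isLittleO_log_rpow_rpow_atTop s hr).tendsto_div_nhds_zero.comp
      (tendsto_natCast_atTop_atTop (R := ℝ))
    refine h1.congr fun T => ?_
    rw [hldef]
    rfl
  have hptop : Tendsto p atTop atTop := by
    have h1 := (tendsto_rpow_atTop (by norm_num : (0:ℝ) < 2/3)).comp
      (tendsto_natCast_atTop_atTop (R := ℝ))
    have h2 := (tendsto_rpow_atTop (by norm_num : (0:ℝ) < 1/3)).comp hl
    have h3 := h1.atTop_mul_atTop₀ h2
    refine h3.congr fun T => ?_
    rw [hpdef]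
    rfl
  have htδpos : 0 < tδ := by
    rw [htδ]
    have h1 : (1:ℝ) < d / δ' := by
      rw [lt_div_iff₀ hδ0]
      have h2 : (1:ℝ) ≤ d := by exact_mod_cast hd
      linarith
    exact mul_pos (by positivity) (Real.log_pos h1)
  have hT'pos : ∀ T, 0 < T' T := by
    intro T
    rw [hT']
    exact lt_of_lt_of_le htδpos ((le_max_left _ _).trans (le_max_right _ _))
  obtain ⟨D, hD⟩ : ∃ D : ℝ, D = (d:ℝ) * V m₀ := ⟨_, rfl⟩
  have hDpos : 0 < D := hD ▸ mul_pos hd0 (hVpos m₀)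
  obtain ⟨A₀, hA₀⟩ : ∃ A₀ : ℝ, A₀ = (2/lam) * D ^ ((1:ℝ)/3) := ⟨_, rfl⟩
  have hA₀pos : 0 < A₀ := hA₀ ▸ mul_pos (by positivity) (Real.rpow_pos_of_pos hDpos _)
  -- third term of T' over p
  have hc2 : Tendsto (fun T : ℕ => (2/lam) * (βmax T * T) ^ ((2:ℝ)/3) / p T) atTop (nhds A₀) := by
    have h1 : Tendsto (fun T : ℕ => (2/lam) * ((βmax T / Real.sqrt (l T)) ^ 2) ^ ((1:ℝ)/3))
        atTop (nhds ((2/lam) * (b m₀ ^ 2) ^ ((1:ℝ)/3))) :=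
      tendsto_const_nhds.mul ((hvlim.pow 2).rpow_const (Or.inr (by norm_num)))
    have hval : (2/lam) * (b m₀ ^ 2) ^ ((1:ℝ)/3) = A₀ := by
      rw [hA₀, hb, Real.sq_sqrt (mul_pos hd0 (hVpos m₀)).le, hD]
    rw [← hval]
    refine h1.congr' ?_
    filter_upwards [hev, hevl] with T hT hlT
    have hT0 : (0:ℝ) < T := by linarith
    have hβ0 : 0 ≤ βmax T := by rw [hβmaxeq]; exact (hβpos T m₀).le
    rw [hpdef, div_pow, Real.sq_sqrt hlT.le,
      Real.div_rpow (by positivity) hlT.le,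
      ← Real.rpow_natCast (βmax T) 2, ← Real.rpow_mul hβ0,
      Real.mul_rpow hβ0 hT0.le]
    have e1 : ((2:ℕ):ℝ) * ((1:ℝ)/3) = (2:ℝ)/3 := by norm_num
    rw [e1]
    have hTne : ((T:ℝ) ^ ((2:ℝ)/3)) ≠ 0 := (Real.rpow_pos_of_pos hT0 _).ne'
    have hlne : (l T ^ ((1:ℝ)/3)) ≠ 0 := (Real.rpow_pos_of_pos hlT _).ne'
    field_simp
  have hth0 : Tendsto (fun T : ℕ => th T / p T) atTop (nhds 0) := by
    have h1 : Tendsto (fun T : ℕ => (32*K^2/lam) * ((q' T / Real.sqrt (l T))^2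
          * (l T ^ ((2:ℝ)/3) / (T:ℝ) ^ ((2:ℝ)/3))) - (2*ν/lam) / p T) atTop
        (nhds ((32*K^2/lam) * (Q^2 * 0) - 0)) :=
      Tendsto.sub (tendsto_const_nhds.mul ((hqlim.pow 2).mul (hLO _ _ (by norm_num))))
        (tendsto_const_nhds.div_atTop hptop)
    rw [mul_zero, mul_zero, sub_zero] at h1
    refine h1.congr' ?_
    filter_upwards [hev, hevl] with T hT hlT
    have hT0 : (0:ℝ) < T := by linarith
    rw [hth, hpdef, sub_div, div_pow, Real.sq_sqrt hlT.le]
    congr 1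
    have hTne : ((T:ℝ) ^ ((2:ℝ)/3)) ≠ 0 := (Real.rpow_pos_of_pos hT0 _).ne'
    have hlne : (l T ^ ((1:ℝ)/3)) ≠ 0 := (Real.rpow_pos_of_pos hlT _).ne'
    have key : l T ^ ((2:ℝ)/3) * l T ^ ((1:ℝ)/3) = l T := by
      rw [← Real.rpow_add hlT]
      norm_num
    field_simp
    linear_combination (q' T ^ 2) * key
  have hT'p : Tendsto (fun T : ℕ => T' T / p T) atTop (nhds A₀) := by
    have htδ0 : Tendsto (fun T : ℕ => tδ / p T) atTop (nhds 0) :=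
      tendsto_const_nhds.div_atTop hptop
    have h1 := hth0.max (htδ0.max hc2)
    have hval : max (0:ℝ) (max 0 A₀) = A₀ := by
      rw [max_eq_right hA₀pos.le, max_eq_right hA₀pos.le]
    rw [hval] at h1
    refine h1.congr' ?_
    filter_upwards [hev, hevl] with T hT hlT
    have hT0 : (0:ℝ) < T := by linarith
    have hp0 : 0 < p T := by
      rw [hpdef]
      exact mul_pos (Real.rpow_pos_of_pos hT0 _) (Real.rpow_pos_of_pos hlT _)
    rw [hT', ← max_div_div_right hp0.le, ← max_div_div_right hp0.le]
  have hT'T : Tendsto (fun T : ℕ => T' T / T) atTop (nhds 0) := by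
    have h1 := hT'p.mul (hLO ((1:ℝ)/3) ((1:ℝ)/3) (by norm_num))
    rw [mul_zero] at h1
    refine h1.congr' ?_
    filter_upwards [hev, hevl] with T hT hlT
    have hT0 : (0:ℝ) < T := by linarith
    have hTne : ((T:ℝ) ^ ((1:ℝ)/3)) ≠ 0 := (Real.rpow_pos_of_pos hT0 _).ne'
    have hT23 : ((T:ℝ) ^ ((2:ℝ)/3)) ≠ 0 := (Real.rpow_pos_of_pos hT0 _).ne'
    have hlne : (l T ^ ((1:ℝ)/3)) ≠ 0 := (Real.rpow_pos_of_pos hlT _).ne'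
    have key : (T:ℝ) ^ ((2:ℝ)/3) * (T:ℝ) ^ ((1:ℝ)/3) = (T:ℝ) := by
      rw [← Real.rpow_add hT0]
      norm_num
    rw [hpdef]
    field_simp
    linear_combination (-(T' T)) * key
  have hu : Tendsto (fun T : ℕ => ((T:ℝ) - T' T) / T) atTop (nhds 1) := by
    have h1 := (tendsto_const_nhds (x := (1:ℝ)) (f := atTop (α := ℕ))).sub hT'T
    rw [sub_zero] at h1
    refine h1.congr' ?_
    filter_upwards [hev] with T hT
    have hT0 : (0:ℝ) < T := by linarith
    rw [sub_div, div_self hT0.ne']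
  have hslim : Tendsto (fun T : ℕ => Real.sqrt (2*ν + lam * T' T) / Real.sqrt (p T)) atTop
      (nhds (Real.sqrt (lam * A₀))) := by
    have h1 : Tendsto (fun T : ℕ => (2*ν + lam * T' T) / p T) atTop
        (nhds (0 + lam * A₀)) := by
      have h1a := (tendsto_const_nhds (x := 2*ν) (f := atTop (α := ℕ))).div_atTop hptop
      have h1b := (tendsto_const_nhds (x := lam) (f := atTop (α := ℕ))).mul hT'p
      refine (h1a.add h1b).congr fun T => ?_
      ring
    rw [zero_add] at h1
    have h2 := h1.sqrt
    refine h2.congr' ?_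
    filter_upwards [hev, hevl] with T hT hlT
    have h3 : (0:ℝ) ≤ 2*ν + lam*T' T := by nlinarith [hT'pos T]
    rw [Real.sqrt_div h3]
  have hElim : Tendsto (fun T : ℕ => Real.sqrt (((M:ℝ) - 1) + (2 * q' T * ρmax T - 1)^2)) atTop
      (nhds (Real.sqrt (((M:ℝ) - 1) + (2 * (⨆ m, F m) - 1)^2))) := by
    have h2 : Tendsto (fun T : ℕ => ((M:ℝ) - 1) + (2 * q' T * ρmax T - 1)^2) atTop
        (nhds (((M:ℝ) - 1) + (2 * (⨆ m, F m) - 1)^2)) := by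
      have h3 := (tendsto_const_nhds (x := ((M:ℝ) - 1)) (f := atTop (α := ℕ))).add
        ((((tendsto_const_nhds (x := (2:ℝ)) (f := atTop (α := ℕ))).mul hρlim).sub
          (tendsto_const_nhds (x := (1:ℝ)))).pow 2)
      exact h3.congr fun T => by ring
    exact h2.sqrt
  have H1 : Tendsto (fun T : ℕ => 2*L*K*S*Real.sqrt M * T' T / p T) atTop
      (nhds (2*L*K*S*Real.sqrt M * A₀)) := by
    have h1 := (tendsto_const_nhds (x := 2*L*K*S*Real.sqrt M) (f := atTop (α := ℕ))).mul hT'p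
    exact h1.congr fun T => by rw [mul_div_assoc]
  have hwne : Real.sqrt (lam * A₀) ≠ 0 := (Real.sqrt_pos.mpr (mul_pos hlam hA₀pos)).ne'
  have H2 : Tendsto (fun T : ℕ => L * ((T:ℝ) - T' T)
      * (2 * Real.sqrt 2 * K * βmax T / Real.sqrt (2*ν + lam * T' T))
      * Real.sqrt (((M:ℝ) - 1) + (2 * q' T * ρmax T - 1)^2) / p T) atTop
      (nhds ((L * (2 * Real.sqrt 2 * K) * (1 * (b m₀ / Real.sqrt (lam * A₀))))
        * Real.sqrt (((M:ℝ) - 1) + (2 * (⨆ m, F m) - 1)^2))) := by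
    have h1 := ((tendsto_const_nhds (x := L * (2 * Real.sqrt 2 * K)) (f := atTop (α := ℕ))).mul
      (hu.mul (hvlim.div hslim hwne))).mul hElim
    refine h1.congr' ?_
    filter_upwards [hev, hevl] with T hT hlT
    have hT0 : (0:ℝ) < T := by linarith
    have hp0 : 0 < p T := by
      rw [hpdef]
      exact mul_pos (Real.rpow_pos_of_pos hT0 _) (Real.rpow_pos_of_pos hlT _)
    have hs0 : 0 < Real.sqrt (2*ν + lam*T' T) := Real.sqrt_pos.mpr (by nlinarith [hT'pos T])
    have hsp : 0 < Real.sqrt (p T) := Real.sqrt_pos.mpr hp0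
    have hsl : 0 < Real.sqrt (l T) := Real.sqrt_pos.mpr hlT
    have key : p T * Real.sqrt (p T) = (T:ℝ) * Real.sqrt (l T) := by
      rw [hpdef, Real.sqrt_eq_rpow, Real.sqrt_eq_rpow,
        Real.mul_rpow (Real.rpow_nonneg hT0.le _) (Real.rpow_nonneg hlT.le _),
        ← Real.rpow_mul hT0.le, ← Real.rpow_mul hlT.le, mul_mul_mul_comm,
        ← Real.rpow_add hT0, ← Real.rpow_add hlT]
      norm_num [Real.rpow_one]
    have h9 : ((T:ℝ) - T' T)/(T:ℝ) * ((βmax T / Real.sqrt (l T))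
        / (Real.sqrt (2*ν + lam*T' T) / Real.sqrt (p T)))
        = ((T:ℝ) - T' T) * βmax T / (Real.sqrt (2*ν + lam*T' T) * p T) := by
      field_simp
      linear_combination (((T:ℝ) - T' T) * βmax T * (Real.sqrt (2*ν + T' T * lam))⁻¹) * key
    simp only [Pi.div_apply]
    rw [h9]
    ring
  have hlogX : Tendsto (fun T : ℕ => Real.log (1 + T*K^2/((d:ℝ)*ν)) / l T) atTop (nhds 1) := by
    have h2 : (0:ℝ) < K^2/((d:ℝ)*ν) := by positivity
    have h3 := aux_log_affine one_pos h2
    refine h3.congr fun T => ?_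
    rw [hldef]
    congr 3
    ring
  have hSlim : Tendsto (fun T : ℕ => (∑ m, (β T m / Real.sqrt (l T))^2)) atTop
      (nhds (∑ m, b m ^2)) := tendsto_finset_sum _ fun m _ => (hβl m).pow 2
  have hI0 : Tendsto (fun T : ℕ => (2*(d:ℝ)) * (Real.log (1 + T*K^2/((d:ℝ)*ν))/l T)
      * (((T:ℝ) - T' T)/T) * (∑ m, (β T m/Real.sqrt (l T))^2)
      * (l T ^ ((4:ℝ)/3) / (T:ℝ) ^ ((1:ℝ)/3))) atTop (nhds 0) := by
    have h1 := ((((tendsto_const_nhds (x := 2*(d:ℝ)) (f := atTop (α := ℕ))).mul hlogX).mul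
      hu).mul hSlim).mul (hLO ((4:ℝ)/3) ((1:ℝ)/3) (by norm_num))
    simpa using h1
  have H3 : Tendsto (fun T : ℕ => L * max (1/(2*q' T)) 2
      * Real.sqrt (2*(d:ℝ)*Real.log (1 + T*K^2/((d:ℝ)*ν))*((T:ℝ) - T' T)*∑ m, β T m^2) / p T)
      atTop (nhds 0) := by
    have h2 := hI0.sqrt
    rw [Real.sqrt_zero] at h2
    have h3 := (tendsto_const_nhds (x := L*2) (f := atTop (α := ℕ))).mul h2
    rw [mul_zero] at h3
    refine h3.congr' ?_
    filter_upwards [hev, hevl, hqtop.eventually_ge_atTop 1,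
      hT'T.eventually_le_const one_pos] with T hT hlT hq1 hT'le
    have hT0 : (0:ℝ) < T := by linarith
    have hp0 : 0 < p T := by
      rw [hpdef]
      exact mul_pos (Real.rpow_pos_of_pos hT0 _) (Real.rpow_pos_of_pos hlT _)
    have hT'leT : T' T ≤ (T:ℝ) := (div_le_one hT0).mp hT'le
    have hmax : max (1/(2*q' T)) 2 = 2 := by
      apply max_eq_right
      rw [div_le_iff₀ (by positivity : (0:ℝ) < 2*q' T)]
      nlinarith [hqpos T]
    have hlogX0 : 0 ≤ Real.log (1 + T*K^2/((d:ℝ)*ν)) :=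
      Real.log_nonneg (le_add_of_nonneg_right (by positivity))
    have hI : (0:ℝ) ≤ 2*(d:ℝ)*Real.log (1 + T*K^2/((d:ℝ)*ν))*((T:ℝ) - T' T)*∑ m, β T m^2 := by
      apply mul_nonneg
      apply mul_nonneg
      apply mul_nonneg (by positivity) hlogX0
      · linarith
      · exact Finset.sum_nonneg fun m _ => sq_nonneg _
    have hIdent : (2*(d:ℝ)) * (Real.log (1 + T*K^2/((d:ℝ)*ν))/l T) * (((T:ℝ) - T' T)/T)
        * (∑ m, (β T m/Real.sqrt (l T))^2) * (l T ^ ((4:ℝ)/3) / (T:ℝ) ^ ((1:ℝ)/3))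
        = (2*(d:ℝ)*Real.log (1 + T*K^2/((d:ℝ)*ν))*((T:ℝ) - T' T)*∑ m, β T m^2) / p T ^ 2 := by
      have e1 : ∑ m, (β T m/Real.sqrt (l T))^2 = (∑ m, β T m^2) / l T := by
        rw [Finset.sum_div]
        exact Finset.sum_congr rfl fun m _ => by rw [div_pow, Real.sq_sqrt hlT.le]
      have e2 : p T ^ 2 = (T:ℝ) ^ ((4:ℝ)/3) * l T ^ ((2:ℝ)/3) := by
        rw [hpdef, mul_pow, ← Real.rpow_natCast ((T:ℝ) ^ ((2:ℝ)/3)) 2,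
          ← Real.rpow_natCast (l T ^ ((1:ℝ)/3)) 2, ← Real.rpow_mul hT0.le,
          ← Real.rpow_mul hlT.le]
        norm_num
      have key1 : l T ^ ((4:ℝ)/3) * l T ^ ((2:ℝ)/3) = l T ^ 2 := by
        rw [← Real.rpow_add hlT, ← Real.rpow_natCast (l T) 2]
        norm_num
      have key2 : (T:ℝ) * (T:ℝ) ^ ((1:ℝ)/3) = (T:ℝ) ^ ((4:ℝ)/3) := by
        rw [← Real.rpow_one_add' hT0.le (by norm_num)]
        norm_num
      rw [e1, e2]
      generalize Real.log (1 + (T:ℝ)*K^2/((d:ℝ)*ν)) = W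
      have h5 : ((T:ℝ) ^ ((1:ℝ)/3)) ≠ 0 := (Real.rpow_pos_of_pos hT0 _).ne'
      have h6 : ((T:ℝ) ^ ((4:ℝ)/3)) ≠ 0 := (Real.rpow_pos_of_pos hT0 _).ne'
      have h7 : (l T ^ ((4:ℝ)/3)) ≠ 0 := (Real.rpow_pos_of_pos hlT _).ne'
      have h8 : (l T ^ ((2:ℝ)/3)) ≠ 0 := (Real.rpow_pos_of_pos hlT _).ne'
      field_simp
      linear_combination (W*((T:ℝ) - T' T)*(∑ m, β T m^2)*(T:ℝ)^((4:ℝ)/3)) * key1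
        + (-(W*((T:ℝ) - T' T)*(∑ m, β T m^2)*l T^2)) * key2
    rw [hmax, hIdent, Real.sqrt_div hI, Real.sqrt_sq hp0.le]
    ring
  have Hsum := (H1.add H2).add H3
  rw [add_zero] at Hsum
  rw [hsupα]
  have hFsup : (⨆ m, ∑ m', (c m * Real.sqrt (R ^ 2 + (α m') ^ 2 * σ ^ 2))
      / (c m' * Real.sqrt (R ^ 2 + (α m) ^ 2 * σ ^ 2))) = ⨆ m, F m :=
    iSup_congr fun m => (hF m).symm
  rw [hFsup]
  have h1 : Real.sqrt 2 * b m₀ / Real.sqrt (lam * A₀) = D ^ ((1:ℝ)/3) := by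
    have h2 : lam * A₀ = 2 * D ^ ((1:ℝ)/3) := by
      rw [hA₀]
      field_simp
    have h4 : D ^ ((2:ℝ)/3) = D / D ^ ((1:ℝ)/3) := by
      rw [show (2:ℝ)/3 = 1 - 1/3 by norm_num, Real.rpow_sub hDpos, Real.rpow_one]
    rw [h2, hb, ← hD, Real.sqrt_mul (by norm_num : (0:ℝ) ≤ 2),
      mul_div_mul_left _ _ (by positivity : Real.sqrt 2 ≠ 0),
      ← Real.sqrt_div hDpos.le, ← h4, Real.sqrt_eq_rpow, ← Real.rpow_mul hDpos.le]
    norm_num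
  have hvaleq : (2*L*K*S*Real.sqrt M * A₀
      + (L * (2 * Real.sqrt 2 * K) * (1 * (b m₀ / Real.sqrt (lam * A₀))))
        * Real.sqrt (((M:ℝ) - 1) + (2 * (⨆ m, F m) - 1)^2))
      = 2 * L * K * ((d:ℝ) * (R ^ 2 + α m₀ ^ 2 * σ ^ 2)) ^ ((1:ℝ)/3)
        * (2 * S * Real.sqrt M / lam
          + Real.sqrt (((M:ℝ) - 1) + (2 * (⨆ m, F m) - 1) ^ 2)) := by
    have hDe : ((d:ℝ) * (R ^ 2 + α m₀ ^ 2 * σ ^ 2)) = D := by rw [hD, hV]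
    rw [hDe]
    linear_combination (2*L*K*S*Real.sqrt M) * hA₀
      + (2*L*K*Real.sqrt (((M:ℝ) - 1) + (2 * (⨆ m, F m) - 1)^2)) * h1
  rw [← hvaleq]
  refine Hsum.congr' ?_
  filter_upwards [hev] with T hT
  have hT0 : (0:ℝ) < T := by linarith
  have hpe : ((T:ℝ)^2 * Real.log T)^((1:ℝ)/3) = p T := by
    rw [hpdef, hldef, Real.mul_rpow (by positivity) (Real.log_nonneg (by linarith)),
      ← Real.rpow_natCast (T:ℝ) 2, ← Real.rpow_mul hT0.le]
    norm_num
  rw [hr, hpe, add_div, add_div]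
end
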